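/- arXiv:1812.10096 — 5 statements merged into one kernel-verified Lean document; each statement's English description precedes it below -/
import Mathlib

section
/- Poincaré-type inequality on a network: there exists a constant C > 0 such that for every family v = (v^i) of H¹ functions on the edges and every family V = (V^j) ∈ (ℝ³)^{n_V} of vertex vectors, one has (Σ_i ∫₀^{ℓⁱ} |v^i(s)|² ds)^{1/2} ≤ C · ( Σ_i ∫₀^{ℓⁱ} |∂ₛv^i(s)|² ds + |Σ_i ∫₀^{ℓⁱ} v^i(s) ds|² + Σ_i |v^i(0) − V^{tail(i)}|² + Σ_i |v^i(ℓⁱ) − V^{head(i)}|² )^{1/2}. -/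
/-!
By Cauchy–Schwarz an H¹ function on an edge of length ℓ oscillates by at most
√(ℓ ∫ |∂ₛv|²). Together with the two endpoint terms this makes the values at the two ends of
every edge differ by O(√D), where D is the right-hand side squared; by connectivity all vertex
values are then within O(√D) of each other, and every vⁱ is within O(√D) of every vertex value
Vʲ. The mean term fixes the common level: (Σ ℓⁱ) |Vʲ| ≤ |Σ ∫ vⁱ| + (Σ ℓⁱ) O(√D). Hence
|vⁱ| = O(√D) pointwise, and integrating gives the L² bound.
-/

open MeasureTheory Matrix

noncomputable section

abbrev E3 : Type := EuclideanSpace ℝ (Fin 3)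

def dot3 (a b : E3) : ℝ := ∑ j, a j * b j

def cross3 (a b : E3) : E3 :=
  WithLp.toLp 2 ![a 1 * b 2 - a 2 * b 1, a 2 * b 0 - a 0 * b 2, a 0 * b 1 - a 1 * b 0]

def SqIntOn (f : ℝ → E3) (l : ℝ) : Prop :=
  IntegrableOn f (Set.Ioc 0 l) ∧ IntegrableOn (fun s => ‖f s‖ ^ 2) (Set.Ioc 0 l)

def H1On (l : ℝ) (v dv : ℝ → E3) : Prop :=
  ContinuousOn v (Set.Icc 0 l) ∧ SqIntOn dv l ∧
    ∀ x ∈ Set.Icc 0 l, v x = v 0 + ∫ s in Set.Ioc 0 x, dv s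

def EdgeConn {nE nV : ℕ} (tail head : Fin nE → Fin nV) : Prop :=
  ∀ a b : Fin nV, Relation.ReflTransGen
    (fun x y => ∃ i, (tail i = x ∧ head i = y) ∨ (tail i = y ∧ head i = x)) a b

variable {nE nV : ℕ}

def bform (tail head : Fin nE → Fin nV) (l : Fin nE → ℝ) (t : Fin nE → ℝ → E3)
    (q p : Fin nE → ℝ → E3) (Pp Pm Qp Qm : Fin nE → E3) (al be : E3)
    (v dv w dw : Fin nE → ℝ → E3) (V W : Fin nV → E3) : ℝ :=
  (∑ i, ∫ s in Set.Ioc 0 (l i),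
      (-(dot3 (p i s) (dv i s + cross3 (t i s) (w i s))) - dot3 (q i s) (dw i s)))
  + (∑ i, (dot3 (Pp i) (v i (l i)) - dot3 (Pm i) (v i 0)))
  + (∑ i, (dot3 (Qp i) (w i (l i)) - dot3 (Qm i) (w i 0)))
  - (∑ j, dot3 ((∑ i ∈ Finset.univ.filter fun i => head i = j, Pp i)
        - ∑ i ∈ Finset.univ.filter fun i => tail i = j, Pm i) (V j))
  - (∑ j, dot3 ((∑ i ∈ Finset.univ.filter fun i => head i = j, Qp i)
        - ∑ i ∈ Finset.univ.filter fun i => tail i = j, Qm i) (W j))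
  + dot3 al (∑ i, ∫ s in Set.Ioc 0 (l i), v i s)
  + dot3 be (∑ i, ∫ s in Set.Ioc 0 (l i), w i s)

def normVsq (l : Fin nE → ℝ) (q p : Fin nE → ℝ → E3) (Pp Pm Qp Qm : Fin nE → E3)
    (al be : E3) : ℝ :=
  (∑ i, ∫ s in Set.Ioc 0 (l i), (‖q i s‖ ^ 2 + ‖p i s‖ ^ 2))
  + (∑ i, ‖Pp i‖ ^ 2) + (∑ i, ‖Pm i‖ ^ 2) + (∑ i, ‖Qp i‖ ^ 2) + (∑ i, ‖Qm i‖ ^ 2)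
  + ‖al‖ ^ 2 + ‖be‖ ^ 2

def normMsq (l : Fin nE → ℝ) (v dv w dw : Fin nE → ℝ → E3) (V W : Fin nV → E3) : ℝ :=
  (∑ i, ∫ s in Set.Ioc 0 (l i), (‖v i s‖ ^ 2 + ‖dv i s‖ ^ 2 + ‖w i s‖ ^ 2 + ‖dw i s‖ ^ 2))
  + (∑ j, ‖V j‖ ^ 2) + (∑ j, ‖W j‖ ^ 2)

def matVec (A : Matrix (Fin 3) (Fin 3) ℝ) (x : E3) : E3 := WithLp.toLp 2 (fun j => ∑ l, A j l * x l)

def aform (l : Fin nE → ℝ) (Q : Fin nE → ℝ → Matrix (Fin 3) (Fin 3) ℝ)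
    (H : Fin nE → Matrix (Fin 3) (Fin 3) ℝ) (q xi : Fin nE → ℝ → E3) : ℝ :=
  ∑ i, ∫ s in Set.Ioc 0 (l i),
    dot3 (matVec (Q i s * (H i)⁻¹ * (Q i s)ᵀ) (q i s)) (xi i s)

def PolyDeg (m : ℕ) (g : ℝ → E3) : Prop :=
  ∀ j : Fin 3, ∃ P : Polynomial ℝ, P.natDegree ≤ m ∧ ∀ s, g s j = P.eval s

def SobOn : ℕ → ℝ → (ℝ → E3) → Prop
  | 0, l, g => SqIntOn g l
  | m + 1, l, g => ∃ g', SobOn m l g' ∧ ContinuousOn g (Set.Icc 0 l) ∧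
      ∀ x ∈ Set.Icc 0 l, g x = g 0 + ∫ s in Set.Ioc 0 x, g' s

open Set

theorem integral_norm_le_sqrt_mul_integral_sq_norm {α E : Type*} [MeasurableSpace α]
    {μ : Measure α} [IsFiniteMeasure μ] [NormedAddCommGroup E] {f : α → E}
    (hf : AEStronglyMeasurable f μ) (hf2 : Integrable (fun x => ‖f x‖ ^ 2) μ) :
    ∫ x, ‖f x‖ ∂μ ≤ √(μ.real univ * ∫ x, ‖f x‖ ^ 2 ∂μ) := by
  have hfL2 : MemLp (fun x => ‖f x‖) (ENNReal.ofReal 2) μ := by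
    simpa using (memLp_two_iff_integrable_sq_norm hf.norm).2 (by simpa using hf2)
  have h1L2 : MemLp (fun _ => (1 : ℝ)) (ENNReal.ofReal 2) μ := memLp_const 1
  have := integral_mul_norm_le_Lp_mul_Lq Real.HolderConjugate.two_two hfL2 h1L2
  simp only [norm_norm, norm_one, mul_one, integral_const, smul_eq_mul, Real.rpow_two,
    one_pow] at this
  rwa [mul_comm, Real.sqrt_mul' _ measureReal_nonneg, Real.sqrt_eq_rpow, Real.sqrt_eq_rpow]

theorem H1On.norm_sub_le {l : ℝ} {v dv : ℝ → E3} (h : H1On l v dv) {x : ℝ} (hx : x ∈ Icc 0 l) :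
    ‖v x - v 0‖ ≤ √(l * ∫ s in Ioc 0 l, ‖dv s‖ ^ 2) := by
  obtain ⟨-, ⟨hdv, hdv2⟩, hrep⟩ := h
  calc ‖v x - v 0‖ = ‖∫ s in Ioc 0 x, dv s‖ := by rw [hrep x hx, add_sub_cancel_left]
    _ ≤ ∫ s in Ioc 0 x, ‖dv s‖ := norm_integral_le_integral_norm _
    _ ≤ ∫ s in Ioc 0 l, ‖dv s‖ :=
      setIntegral_mono_set hdv.norm (.of_forall fun _ => norm_nonneg _)
        (Ioc_subset_Ioc_right hx.2).eventuallyLE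
    _ ≤ √(l * ∫ s in Ioc 0 l, ‖dv s‖ ^ 2) := by
      simpa [Real.volume_real_Ioc_of_le (hx.1.trans hx.2)] using
        integral_norm_le_sqrt_mul_integral_sq_norm hdv.aestronglyMeasurable hdv2

theorem Relation.ReflTransGen.exists_dist_le_mul {α β : Type*} [PseudoMetricSpace β]
    {r : α → α → Prop} {a b : α} (h : Relation.ReflTransGen r a b) :
    ∃ n : ℕ, ∀ (f : α → β) (ε : ℝ), 0 ≤ ε → (∀ x y, r x y → dist (f x) (f y) ≤ ε) →
      dist (f a) (f b) ≤ n * ε := by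
  induction h with
  | refl => exact ⟨0, fun f ε _ _ => by simp⟩
  | tail _ hbc ih =>
    obtain ⟨n, hn⟩ := ih
    refine ⟨n + 1, fun f ε hε hr => ?_⟩
    calc dist (f a) _ ≤ dist (f a) (f _) + dist (f _) (f _) := dist_triangle _ _ _
      _ ≤ n * ε + ε := add_le_add (hn f ε hε hr) (hr _ _ hbc)
      _ = (n + 1 : ℕ) * ε := by push_cast; ring

theorem exists_dist_le_mul_of_forall_reflTransGen {α β : Type*} [Fintype α] [PseudoMetricSpace β]
    {r : α → α → Prop} (h : ∀ a b, Relation.ReflTransGen r a b) :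
    ∃ K : ℝ, 0 ≤ K ∧ ∀ (f : α → β) (ε : ℝ), 0 ≤ ε → (∀ x y, r x y → dist (f x) (f y) ≤ ε) →
      ∀ a b, dist (f a) (f b) ≤ K * ε := by
  choose n hn using fun a b => (h a b).exists_dist_le_mul (β := β)
  refine ⟨(Finset.univ.sup fun p : α × α => n p.1 p.2 : ℕ), Nat.cast_nonneg _,
    fun f ε hε hr a b => (hn a b f ε hε hr).trans ?_⟩
  gcongr
  exact Finset.le_sup (f := fun p : α × α => n p.1 p.2) (Finset.mem_univ (a, b))

theorem sum_mul_norm_le_norm_sum_setIntegral_add {ι E : Type*} [Fintype ι]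
    [NormedAddCommGroup E] [NormedSpace ℝ E] [CompleteSpace E] {l : ι → ℝ} {v : ι → ℝ → E}
    {c : E} {ρ : ℝ} (hl : ∀ i, 0 ≤ l i) (hv : ∀ i, IntegrableOn (v i) (Ioc 0 (l i)))
    (hc : ∀ i, ∀ x ∈ Ioc 0 (l i), ‖v i x - c‖ ≤ ρ) :
    (∑ i, l i) * ‖c‖ ≤ ‖∑ i, ∫ s in Ioc 0 (l i), v i s‖ + (∑ i, l i) * ρ := by
  have hsplit : (∑ i, l i) • c =
      (∑ i, ∫ s in Ioc 0 (l i), v i s) - ∑ i, ∫ s in Ioc 0 (l i), (v i s - c) := by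
    rw [← Finset.sum_sub_distrib, Finset.sum_smul]
    refine Finset.sum_congr rfl fun i _ => ?_
    rw [integral_sub (hv i) (integrableOn_const measure_Ioc_lt_top.ne), setIntegral_const,
      Real.volume_real_Ioc_of_le (hl i), sub_zero, sub_sub_cancel]
  have hpiece : ∀ i, ‖∫ s in Ioc 0 (l i), (v i s - c)‖ ≤ ρ * l i := fun i => by
    simpa [Real.volume_real_Ioc_of_le (hl i)] using
      norm_setIntegral_le_of_norm_le_const (μ := volume) measure_Ioc_lt_top (hc i)
  calc (∑ i, l i) * ‖c‖ = ‖(∑ i, l i) • c‖ := by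
        rw [norm_smul, Real.norm_of_nonneg (Finset.sum_nonneg fun i _ => hl i)]
    _ ≤ ‖∑ i, ∫ s in Ioc 0 (l i), v i s‖ + ∑ i, ‖∫ s in Ioc 0 (l i), (v i s - c)‖ := by
        rw [hsplit]; exact (norm_sub_le _ _).trans (add_le_add_right (norm_sum_le _ _) _)
    _ ≤ ‖∑ i, ∫ s in Ioc 0 (l i), v i s‖ + (∑ i, l i) * ρ := by
        rw [Finset.sum_mul]; gcongr with i; rw [mul_comm]; exact hpiece i

theorem EdgeConn.exists_norm_sub_le_mul {E : Type*} [SeminormedAddCommGroup E]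
    {tail head : Fin nE → Fin nV} (hconn : EdgeConn tail head) :
    ∃ K : ℝ, 0 ≤ K ∧ ∀ (V : Fin nV → E) (ε : ℝ), 0 ≤ ε →
      (∀ i, ‖V (head i) - V (tail i)‖ ≤ ε) → ∀ a b, ‖V a - V b‖ ≤ K * ε := by
  obtain ⟨K, hK0, hK⟩ := exists_dist_le_mul_of_forall_reflTransGen (β := E) hconn
  refine ⟨K, hK0, fun V ε hε hedge => ?_⟩
  simp only [← dist_eq_norm]
  refine hK V ε hε fun a b ⟨i, hi⟩ => ?_
  rcases hi with ⟨rfl, rfl⟩ | ⟨rfl, rfl⟩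
  · rw [dist_comm, dist_eq_norm]; exact hedge i
  · rw [dist_eq_norm]; exact hedge i

theorem EdgeConn.exists_norm_le_mul {E : Type*} [NormedAddCommGroup E] [NormedSpace ℝ E]
    [CompleteSpace E] {tail head : Fin nE → Fin nV} {l : Fin nE → ℝ} (hl : ∀ i, 0 < l i)
    (hconn : EdgeConn tail head) :
    ∃ M > 0, ∀ (v : Fin nE → ℝ → E) (V : Fin nV → E) (δ : ℝ), 0 ≤ δ →
      (∀ i, IntegrableOn (v i) (Ioc 0 (l i))) →
      (∀ i, ∀ x ∈ Icc 0 (l i), ‖v i x - v i 0‖ ≤ δ) →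
      (∀ i, ‖v i 0 - V (tail i)‖ ≤ δ) →
      (∀ i, ‖v i (l i) - V (head i)‖ ≤ δ) →
      ‖∑ i, ∫ s in Ioc 0 (l i), v i s‖ ≤ δ →
      ∀ i, ∀ x ∈ Icc 0 (l i), ‖v i x‖ ≤ M * δ := by
  obtain ⟨K, hK0, hK⟩ := hconn.exists_norm_sub_le_mul (E := E)
  set L := ∑ i, l i
  have hL0 : 0 ≤ L := Finset.sum_nonneg fun i _ => (hl i).le
  refine ⟨2 * (2 + 3 * K) + L⁻¹, by positivity, fun v V δ hδ hint hosc htail hhead hmean => ?_⟩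
  have hnear_tail : ∀ i, ∀ x ∈ Icc 0 (l i), ‖v i x - V (tail i)‖ ≤ 2 * δ := fun i x hx => by
    linarith [norm_sub_le_norm_sub_add_norm_sub (v i x) (v i 0) (V (tail i)), hosc i x hx,
      htail i]
  have hvertex : ∀ a b, ‖V a - V b‖ ≤ K * (3 * δ) := hK V _ (by positivity) fun i => by
    linarith [norm_sub_le_norm_sub_add_norm_sub (V (head i)) (v i (l i)) (V (tail i)),
      norm_sub_rev (V (head i)) (v i (l i)), hhead i,
      hnear_tail i (l i) ⟨(hl i).le, le_rfl⟩]
  have hnear : ∀ j k, ∀ x ∈ Icc 0 (l k), ‖v k x - V j‖ ≤ (2 + 3 * K) * δ := fun j k x hx => by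
    linarith [norm_sub_le_norm_sub_add_norm_sub (v k x) (V (tail k)) (V j),
      hnear_tail k x hx, hvertex (tail k) j]
  intro i x hx
  have hL : 0 < L := (hl i).trans_le (Finset.single_le_sum (fun k _ => (hl k).le)
    (Finset.mem_univ i))
  have hVtail : L * ‖V (tail i)‖ ≤ L * (L⁻¹ * δ + (2 + 3 * K) * δ) := by
    rw [mul_add, ← mul_assoc, mul_inv_cancel₀ hL.ne', one_mul]
    exact (sum_mul_norm_le_norm_sum_setIntegral_add (fun k => (hl k).le) hint
      fun k y hy => hnear (tail i) k y (Ioc_subset_Icc_self hy)).trans (by gcongr)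
  calc ‖v i x‖ ≤ ‖v i x - V (tail i)‖ + ‖V (tail i)‖ := norm_le_norm_sub_add _ _
    _ ≤ 2 * δ + (L⁻¹ * δ + (2 + 3 * K) * δ) :=
      add_le_add (hnear_tail i x hx) (le_of_mul_le_mul_left hVtail hL)
    _ ≤ (2 * (2 + 3 * K) + L⁻¹) * δ := by nlinarith

theorem sqrt_sum_setIntegral_sq_norm_le {ι E : Type*} [Fintype ι] [NormedAddCommGroup E]
    {l : ι → ℝ} {v : ι → ℝ → E} {B : ℝ} (hl : ∀ i, 0 ≤ l i) (hB : 0 ≤ B)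
    (hv : ∀ i, ∀ x ∈ Ioc 0 (l i), ‖v i x‖ ≤ B) :
    √(∑ i, ∫ s in Ioc 0 (l i), ‖v i s‖ ^ 2) ≤ √(∑ i, l i) * B := by
  have hpiece : ∀ i, ∫ s in Ioc 0 (l i), ‖v i s‖ ^ 2 ≤ l i * B ^ 2 := fun i => by
    have := norm_setIntegral_le_of_norm_le_const (μ := volume) measure_Ioc_lt_top
      fun x hx => (by simpa using pow_le_pow_left₀ (norm_nonneg _) (hv i x hx) 2 :
        ‖‖v i x‖ ^ 2‖ ≤ B ^ 2)
    rw [Real.volume_real_Ioc_of_le (hl i), sub_zero, mul_comm] at this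
    exact (Real.le_norm_self _).trans this
  calc √(∑ i, ∫ s in Ioc 0 (l i), ‖v i s‖ ^ 2) ≤ √((∑ i, l i) * B ^ 2) := by
        rw [Finset.sum_mul]; exact Real.sqrt_le_sqrt (Finset.sum_le_sum fun i _ => hpiece i)
    _ = √(∑ i, l i) * B := by rw [Real.sqrt_mul' _ (sq_nonneg B), Real.sqrt_sq hB]

def networkNormSq (tail head : Fin nE → Fin nV) (l : Fin nE → ℝ) (v dv : Fin nE → ℝ → E3)
    (V : Fin nV → E3) : ℝ :=
  (∑ i, ∫ s in Ioc 0 (l i), ‖dv i s‖ ^ 2)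
    + ‖∑ i, ∫ s in Ioc 0 (l i), v i s‖ ^ 2
    + (∑ i, ‖v i 0 - V (tail i)‖ ^ 2)
    + (∑ i, ‖v i (l i) - V (head i)‖ ^ 2)

section networkNormSq

variable (tail head : Fin nE → Fin nV) (l : Fin nE → ℝ) (v dv : Fin nE → ℝ → E3)
  (V : Fin nV → E3)

theorem integral_sq_norm_le_networkNormSq (i : Fin nE) :
    ∫ s in Ioc 0 (l i), ‖dv i s‖ ^ 2 ≤ networkNormSq tail head l v dv V := by
  have := Finset.single_le_sum (f := fun i => ∫ s in Ioc 0 (l i), ‖dv i s‖ ^ 2)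
    (fun j _ => by positivity) (Finset.mem_univ i)
  unfold networkNormSq
  have : 0 ≤ ∑ i, ‖v i 0 - V (tail i)‖ ^ 2 := by positivity
  have : 0 ≤ ∑ i, ‖v i (l i) - V (head i)‖ ^ 2 := by positivity
  linarith [sq_nonneg ‖∑ i, ∫ s in Ioc 0 (l i), v i s‖]

theorem norm_sum_integral_le_sqrt_networkNormSq :
    ‖∑ i, ∫ s in Ioc 0 (l i), v i s‖ ≤ √(networkNormSq tail head l v dv V) := by
  refine Real.le_sqrt_of_sq_le ?_
  unfold networkNormSq
  have : 0 ≤ ∑ i, ∫ s in Ioc 0 (l i), ‖dv i s‖ ^ 2 := by positivity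
  have : 0 ≤ ∑ i, ‖v i 0 - V (tail i)‖ ^ 2 := by positivity
  have : 0 ≤ ∑ i, ‖v i (l i) - V (head i)‖ ^ 2 := by positivity
  linarith

theorem norm_sub_tail_le_sqrt_networkNormSq (i : Fin nE) :
    ‖v i 0 - V (tail i)‖ ≤ √(networkNormSq tail head l v dv V) := by
  refine Real.le_sqrt_of_sq_le ?_
  have := Finset.single_le_sum (f := fun i => ‖v i 0 - V (tail i)‖ ^ 2)
    (fun j _ => by positivity) (Finset.mem_univ i)
  unfold networkNormSq
  have : 0 ≤ ∑ i, ∫ s in Ioc 0 (l i), ‖dv i s‖ ^ 2 := by positivity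
  have : 0 ≤ ∑ i, ‖v i (l i) - V (head i)‖ ^ 2 := by positivity
  linarith [sq_nonneg ‖∑ i, ∫ s in Ioc 0 (l i), v i s‖]

theorem norm_sub_head_le_sqrt_networkNormSq (i : Fin nE) :
    ‖v i (l i) - V (head i)‖ ≤ √(networkNormSq tail head l v dv V) := by
  refine Real.le_sqrt_of_sq_le ?_
  have := Finset.single_le_sum (f := fun i => ‖v i (l i) - V (head i)‖ ^ 2)
    (fun j _ => by positivity) (Finset.mem_univ i)
  unfold networkNormSq
  have : 0 ≤ ∑ i, ∫ s in Ioc 0 (l i), ‖dv i s‖ ^ 2 := by positivity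
  have : 0 ≤ ∑ i, ‖v i 0 - V (tail i)‖ ^ 2 := by positivity
  linarith [sq_nonneg ‖∑ i, ∫ s in Ioc 0 (l i), v i s‖]

end networkNormSq

/-- Poincaré-type inequality on a network. -/
theorem stent_poincare_inequality
    (tail head : Fin nE → Fin nV) (l : Fin nE → ℝ)
    (hl : ∀ i, 0 < l i) (hconn : EdgeConn tail head) :
    ∃ C > (0:ℝ), ∀ (v dv : Fin nE → ℝ → E3) (V : Fin nV → E3),
      (∀ i, H1On (l i) (v i) (dv i)) →
      Real.sqrt (∑ i, ∫ s in Set.Ioc 0 (l i), ‖v i s‖ ^ 2) ≤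
        C * Real.sqrt ((∑ i, ∫ s in Set.Ioc 0 (l i), ‖dv i s‖ ^ 2)
          + ‖∑ i, ∫ s in Set.Ioc 0 (l i), v i s‖ ^ 2
          + (∑ i, ‖v i 0 - V (tail i)‖ ^ 2)
          + (∑ i, ‖v i (l i) - V (head i)‖ ^ 2)) := by
  obtain ⟨M, hM, hpointwise⟩ := EdgeConn.exists_norm_le_mul (E := E3) hl hconn
  set L := ∑ i, l i
  have hL : 0 ≤ L := Finset.sum_nonneg fun i _ => (hl i).le
  refine ⟨(1 + √L) ^ 2 * M, by positivity, fun v dv V hv => ?_⟩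
  change _ ≤ _ * √(networkNormSq tail head l v dv V)
  set D := networkNormSq tail head l v dv V
  have hD : √D ≤ (1 + √L) * √D := le_mul_of_one_le_left (Real.sqrt_nonneg D) (by simp)
  have hosc : ∀ i, ∀ x ∈ Icc 0 (l i), ‖v i x - v i 0‖ ≤ (1 + √L) * √D := fun i x hx =>
    calc ‖v i x - v i 0‖ ≤ √(l i * ∫ s in Ioc 0 (l i), ‖dv i s‖ ^ 2) := (hv i).norm_sub_le hx
      _ ≤ √(L * D) := Real.sqrt_le_sqrt <| mul_le_mul
          (Finset.single_le_sum (fun k _ => (hl k).le) (Finset.mem_univ i))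
          (integral_sq_norm_le_networkNormSq tail head l v dv V i) (by positivity) hL
      _ ≤ (1 + √L) * √D := by rw [Real.sqrt_mul hL]; gcongr; simp
  have hv_bound := hpointwise v V _ (by positivity)
    (fun i => (hv i).1.integrableOn_Icc.mono_set Ioc_subset_Icc_self) hosc
    (fun i => (norm_sub_tail_le_sqrt_networkNormSq tail head l v dv V i).trans hD)
    (fun i => (norm_sub_head_le_sqrt_networkNormSq tail head l v dv V i).trans hD)
    ((norm_sum_integral_le_sqrt_networkNormSq tail head l v dv V).trans hD)
  calc √(∑ i, ∫ s in Ioc 0 (l i), ‖v i s‖ ^ 2) ≤ √L * (M * ((1 + √L) * √D)) :=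
        sqrt_sum_setIntegral_sq_norm_le (fun i => (hl i).le) (by positivity)
          fun i x hx => hv_bound i x (Ioc_subset_Icc_self hx)
    _ ≤ (1 + √L) * (M * ((1 + √L) * √D)) := by gcongr; simp
    _ = (1 + √L) ^ 2 * M * √D := by ring
end
end

section
/- Triviality of the kernel of B^T: suppose (v^i), (w^i) are families of H¹ functions on the edges and V = (V^j), W = (W^j) ∈ (ℝ³)^{n_V} satisfy, for every edge i: ∂ₛv^i + tⁱ × w^i = 0 almost everywhere and ∂ₛw^i = 0 almost everywhere on [0,ℓⁱ]; Σ_i ∫₀^{ℓⁱ} v^i ds = 0 and Σ_i ∫₀^{ℓⁱ} w^i ds = 0; and the boundary matching conditions v^i(0) = V^{tail(i)}, v^i(ℓⁱ) = V^{head(i)}, w^i(0) = W^{tail(i)}, w^i(ℓⁱ) = W^{head(i)}. Then v^i = 0 and w^i = 0 for every edge i, and V = 0 and W = 0. -/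
open MeasureTheory Matrix

noncomputable section

variable {nE nV : ℕ}

/-! The equation `∂ₛw = 0` makes every `wⁱ` constant; the matching conditions at the vertices and connectedness
make these constants a single vector `ω`, and `∑ᵢ ∫ wⁱ = (∑ᵢ ℓⁱ) • ω = 0` forces `ω = 0`.
Then `tⁱ × wⁱ = 0`, so `∂ₛv = 0` and the same argument applies to `v`. -/

open Set

lemma cross3_zero_right (a : E3) : cross3 a 0 = 0 := by
  ext j; fin_cases j <;> simp [cross3]

theorem H1On.eq_apply_zero_of_ae_eq_zero {l : ℝ} {g dg : ℝ → E3} (h : H1On l g dg)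
    (hdg : ∀ᵐ s ∂(volume.restrict (Ioc 0 l)), dg s = 0) :
    ∀ x ∈ Icc 0 l, g x = g 0 := by
  intro x hx
  have hdgx : ∀ᵐ s ∂(volume.restrict (Ioc 0 x)), dg s = 0 :=
    ae_restrict_of_ae_restrict_of_subset (Ioc_subset_Ioc_right hx.2) hdg
  rw [h.2.2 x hx, integral_eq_zero_of_ae hdgx, add_zero]

theorem EdgeConn.apply_eq_apply {α : Type*} {tail head : Fin nE → Fin nV}
    (hconn : EdgeConn tail head) {f : Fin nV → α} (hf : ∀ i, f (tail i) = f (head i))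
    (a b : Fin nV) : f a = f b := by
  induction hconn a b with
  | refl => rfl
  | tail _ hedge ih =>
    obtain ⟨i, ⟨rfl, rfl⟩ | ⟨rfl, rfl⟩⟩ := hedge
    · exact ih.trans (hf i)
    · exact ih.trans (hf i).symm

theorem eq_zero_of_edgewise_const_of_sum_integral_eq_zero {E : Type*} [NormedAddCommGroup E]
    [NormedSpace ℝ E] [CompleteSpace E] {tail head : Fin nE → Fin nV} {l : Fin nE → ℝ}
    (hl : ∀ i, 0 < l i) (hNE : 0 < nE) (hconn : EdgeConn tail head)
    {w : Fin nE → ℝ → E} {W : Fin nV → E}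
    (hconst : ∀ i, ∀ x ∈ Icc 0 (l i), w i x = w i 0)
    (hint : ∑ i, ∫ s in Ioc 0 (l i), w i s = 0)
    (htail : ∀ i, w i 0 = W (tail i)) (hhead : ∀ i, w i (l i) = W (head i)) :
    (∀ i, ∀ x ∈ Icc 0 (l i), w i x = 0) ∧ W = 0 := by
  let i₀ : Fin nE := ⟨0, hNE⟩
  have hW : ∀ j, W j = W (tail i₀) := fun j =>
    hconn.apply_eq_apply (fun i => by
      rw [← htail, ← hhead, hconst i (l i) ⟨(hl i).le, le_rfl⟩]) j (tail i₀)
  have hedge : ∀ i, ∀ x ∈ Icc 0 (l i), w i x = W (tail i₀) := fun i x hx => by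
    rw [hconst i x hx, htail, hW]
  have hintegral : ∀ i, ∫ s in Ioc 0 (l i), w i s = l i • W (tail i₀) := fun i => by
    rw [setIntegral_congr_fun measurableSet_Ioc fun s hs => hedge i s (Ioc_subset_Icc_self hs),
      setIntegral_const, Real.volume_real_Ioc_of_le (hl i).le, sub_zero]
  have hsum : (∑ i, l i) • W (tail i₀) = 0 := by
    simpa only [Finset.sum_smul, hintegral] using hint
  have hω : W (tail i₀) = 0 :=
    (smul_eq_zero.1 hsum).resolve_left (Finset.sum_pos (fun i _ => hl i) ⟨i₀, by simp⟩).ne'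
  exact ⟨fun i x hx => (hedge i x hx).trans hω, funext fun j => (hW j).trans hω⟩

theorem stent_ker_BT_trivial_general
    (tail head : Fin nE → Fin nV) (l : Fin nE → ℝ)
    (hl : ∀ i, 0 < l i) (hNE : 0 < nE) (hconn : EdgeConn tail head)
    (t : Fin nE → ℝ → E3)
    (v dv w dw : Fin nE → ℝ → E3) (V W : Fin nV → E3)
    (hv : ∀ i, H1On (l i) (v i) (dv i)) (hw : ∀ i, H1On (l i) (w i) (dw i))
    (heq1 : ∀ i, ∀ᵐ s ∂(volume.restrict (Set.Ioc 0 (l i))),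
        dv i s + cross3 (t i s) (w i s) = 0)
    (heq2 : ∀ i, ∀ᵐ s ∂(volume.restrict (Set.Ioc 0 (l i))), dw i s = 0)
    (hint1 : ∑ i, ∫ s in Set.Ioc 0 (l i), v i s = 0)
    (hint2 : ∑ i, ∫ s in Set.Ioc 0 (l i), w i s = 0)
    (hb1 : ∀ i, v i 0 = V (tail i)) (hb2 : ∀ i, v i (l i) = V (head i))
    (hb3 : ∀ i, w i 0 = W (tail i)) (hb4 : ∀ i, w i (l i) = W (head i)) :
    (∀ i, ∀ s ∈ Set.Icc 0 (l i), v i s = 0 ∧ w i s = 0) ∧ V = 0 ∧ W = 0 := by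
  obtain ⟨hw0, hW0⟩ := eq_zero_of_edgewise_const_of_sum_integral_eq_zero hl hNE hconn
    (fun i => (hw i).eq_apply_zero_of_ae_eq_zero (heq2 i)) hint2 hb3 hb4
  have hdv : ∀ i, ∀ᵐ s ∂(volume.restrict (Ioc 0 (l i))), dv i s = 0 := fun i => by
    filter_upwards [heq1 i, ae_restrict_mem measurableSet_Ioc] with s hs hmem
    rwa [hw0 i s (Ioc_subset_Icc_self hmem), cross3_zero_right, add_zero] at hs
  obtain ⟨hv0, hV0⟩ := eq_zero_of_edgewise_const_of_sum_integral_eq_zero hl hNE hconn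
    (fun i => (hv i).eq_apply_zero_of_ae_eq_zero (hdv i)) hint1 hb1 hb2
  exact ⟨fun i s hs => ⟨hv0 i s hs, hw0 i s hs⟩, hV0, hW0⟩

/-- Triviality of the kernel of Bᵀ. -/
theorem stent_ker_BT_trivial
    (tail head : Fin nE → Fin nV) (l : Fin nE → ℝ)
    (hl : ∀ i, 0 < l i) (hNE : 0 < nE) (hconn : EdgeConn tail head)
    (Φ t : Fin nE → ℝ → E3)
    (hΦ : ∀ i, ∀ s ∈ Set.Icc 0 (l i), HasDerivWithinAt (Φ i) (t i s) (Set.Icc 0 (l i)) s)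
    (htc : ∀ i, ContinuousOn (t i) (Set.Icc 0 (l i)))
    (htu : ∀ i, ∀ s ∈ Set.Icc 0 (l i), ‖t i s‖ = 1)
    (v dv w dw : Fin nE → ℝ → E3) (V W : Fin nV → E3)
    (hv : ∀ i, H1On (l i) (v i) (dv i)) (hw : ∀ i, H1On (l i) (w i) (dw i))
    (heq1 : ∀ i, ∀ᵐ s ∂(volume.restrict (Set.Ioc 0 (l i))),
        dv i s + cross3 (t i s) (w i s) = 0)
    (heq2 : ∀ i, ∀ᵐ s ∂(volume.restrict (Set.Ioc 0 (l i))), dw i s = 0)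
    (hint1 : ∑ i, ∫ s in Set.Ioc 0 (l i), v i s = 0)
    (hint2 : ∑ i, ∫ s in Set.Ioc 0 (l i), w i s = 0)
    (hb1 : ∀ i, v i 0 = V (tail i)) (hb2 : ∀ i, v i (l i) = V (head i))
    (hb3 : ∀ i, w i 0 = W (tail i)) (hb4 : ∀ i, w i (l i) = W (head i)) :
    (∀ i, ∀ s ∈ Set.Icc 0 (l i), v i s = 0 ∧ w i s = 0) ∧ V = 0 ∧ W = 0 :=
  stent_ker_BT_trivial_general tail head l hl hNE hconn t v dv w dw V W hv hw heq1 heq2 hint1 hint2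
    hb1 hb2 hb3 hb4

end
end

section
/- Closedness of the range of B^T: the set of all tuples (p, q, P₊, P₋, Q₊, Q₋, α, β), where p = (p^i), q = (q^i) are families of square-integrable functions [0,ℓⁱ] → ℝ³, P₊, P₋, Q₊, Q₋ ∈ (ℝ³)^{n_E} and α, β ∈ ℝ³, for which there exist families (v^i), (w^i) of H¹ functions on the edges and V, W ∈ (ℝ³)^{n_V} with p^i = ∂ₛv^i + tⁱ × w^i a.e., q^i = ∂ₛw^i a.e., α = Σ_i ∫₀^{ℓⁱ} v^i ds, β = Σ_i ∫₀^{ℓⁱ} w^i ds, P₊^i = v^i(ℓⁱ) − V^{head(i)}, P₋^i = v^i(0) − V^{tail(i)}, Q₊^i = w^i(ℓⁱ) − W^{head(i)}, Q₋^i = w^i(0) − W^{tail(i)} for every edge i, is a closed subspace of the product of the L² spaces Π_i L²(0,ℓⁱ;ℝ³) × Π_i L²(0,ℓⁱ;ℝ³) with (ℝ³)^{4 n_E} × ℝ³ × ℝ³ (with the natural product norm). -/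
open MeasureTheory Matrix

noncomputable section

variable {nE nV : ℕ}

/-!
Given `(p, q)`, the system `∂ₛv = p - t × w`, `∂ₛw = q` is solved explicitly on each edge:
`w = w(0) + ∫₀ˢ q` and `v = v(0) - (∫₀ˢ t) × w(0) + v₀`, where `v₀` depends only on `(p, q)`.
So every boundary and mean value in the set is a linear function of the finitely many unknowns
`v(0), w(0), V, W` plus a function of `(p, q)`, and the set is the preimage of the range of a
linear map between finite-dimensional spaces under `x ↦ (P₊, P₋, Q₊, Q₋, α, β) - offset(p, q)`.
The offset is continuous because primitives of `L²` functions, and primitives of their products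
with the bounded field `t`, depend Lipschitz-continuously on them, uniformly on `[0, ℓ]`.
-/

open Set Filter
open scoped ENNReal

theorem cross3_eq_crossProduct (a b : E3) :
    cross3 a b = WithLp.toLp 2 (WithLp.ofLp a ⨯₃ WithLp.ofLp b) := rfl

theorem cross3_add_left (a b c : E3) : cross3 (a + b) c = cross3 a c + cross3 b c := by
  simp [cross3_eq_crossProduct]

theorem cross3_smul_left (r : ℝ) (a b : E3) : cross3 (r • a) b = r • cross3 a b := by
  simp [cross3_eq_crossProduct]

theorem cross3_add_right (a b c : E3) : cross3 a (b + c) = cross3 a b + cross3 a c := by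
  simp [cross3_eq_crossProduct]

theorem cross3_smul_right (r : ℝ) (a b : E3) : cross3 a (r • b) = r • cross3 a b := by
  simp [cross3_eq_crossProduct]

theorem norm_cross3_le (a b : E3) : ‖cross3 a b‖ ≤ ‖a‖ * ‖b‖ := by
  refine (pow_le_pow_iff_left₀ (norm_nonneg _) (by positivity) two_ne_zero).1 ?_
  simp only [mul_pow, EuclideanSpace.norm_sq_eq, Fin.sum_univ_three, Real.norm_eq_abs, sq_abs]
  simp only [cross3, PiLp.toLp_apply, Matrix.cons_val]
  nlinarith [sq_nonneg (a 0 * b 0 + a 1 * b 1 + a 2 * b 2)]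

def cross3Bilin : E3 →L[ℝ] E3 →L[ℝ] E3 :=
  (LinearMap.mk₂ ℝ cross3 cross3_add_left cross3_smul_left cross3_add_right
    cross3_smul_right).mkContinuous₂ 1 fun a b => by simpa using norm_cross3_le a b


section Primitive

variable {E : Type*} [NormedAddCommGroup E]

theorem MeasureTheory.Lp.integral_norm_le_sqrt_measure_mul_norm {α : Type*} [MeasurableSpace α]
    {μ : Measure α} [IsFiniteMeasure μ] (f : Lp E 2 μ) :
    ∫ x, ‖f x‖ ∂μ ≤ √(μ.real univ) * ‖f‖ := by
  have hHolder := eLpNorm_le_eLpNorm_mul_rpow_measure_univ one_le_two (Lp.aestronglyMeasurable f)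
  rw [integral_norm_eq_lintegral_enorm (Lp.aestronglyMeasurable f),
    ← eLpNorm_one_eq_lintegral_enorm, Lp.norm_def]
  calc (eLpNorm f 1 μ).toReal
      ≤ (eLpNorm f 2 μ * μ univ ^ (1 / (1 : ℝ≥0∞).toReal - 1 / (2 : ℝ≥0∞).toReal)).toReal :=
        ENNReal.toReal_mono (ENNReal.mul_ne_top (Lp.eLpNorm_ne_top f)
          (ENNReal.rpow_ne_top_of_nonneg (by norm_num) (measure_ne_top μ _))) hHolder
    _ = √(μ.real univ) * (eLpNorm f 2 μ).toReal := by
        rw [ENNReal.toReal_mul, ← ENNReal.toReal_rpow, Real.sqrt_eq_rpow, mul_comm]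
        norm_num [measureReal_def]

variable [NormedSpace ℝ E]

def primitive (f : ℝ → E) (s : ℝ) : E := ∫ u in Ioc 0 s, f u

@[simp] theorem primitive_zero (f : ℝ → E) : primitive f 0 = 0 := by
  simp [primitive]

theorem primitive_sub {f g : ℝ → E} {s : ℝ} (hf : IntegrableOn f (Ioc 0 s))
    (hg : IntegrableOn g (Ioc 0 s)) :
    primitive (fun u => f u - g u) s = primitive f s - primitive g s :=
  integral_sub hf hg

theorem continuousOn_primitive {f : ℝ → E} {L : ℝ} (hf : IntegrableOn f (Icc 0 L)) :
    ContinuousOn (primitive f) (Icc 0 L) :=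
  intervalIntegral.continuousOn_primitive hf

end Primitive

section UniformlyLipschitz

variable {X E : Type*} [PseudoMetricSpace X] [NormedAddCommGroup E]

def UniformlyLipschitzOn (F : X → ℝ → E) (A : Set ℝ) : Prop :=
  ∃ C, ∀ x y, ∀ s ∈ A, ‖F x s - F y s‖ ≤ C * dist x y

namespace UniformlyLipschitzOn

variable {F G : X → ℝ → E} {A : Set ℝ}

theorem continuous_apply (hF : UniformlyLipschitzOn F A) {s : ℝ} (hs : s ∈ A) :
    Continuous fun x => F x s := by
  obtain ⟨C, hC⟩ := hF
  refine (LipschitzWith.of_dist_le_mul (K := C.toNNReal) fun x y => ?_).continuous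
  rw [dist_eq_norm, Real.coe_toNNReal']
  exact (hC x y s hs).trans (mul_le_mul_of_nonneg_right (le_max_left _ _) dist_nonneg)

theorem sub (hF : UniformlyLipschitzOn F A) (hG : UniformlyLipschitzOn G A) :
    UniformlyLipschitzOn (fun x s => F x s - G x s) A := by
  obtain ⟨C, hC⟩ := hF
  obtain ⟨D, hD⟩ := hG
  refine ⟨C + D, fun x y s hs => ?_⟩
  calc ‖F x s - G x s - (F y s - G y s)‖ = ‖(F x s - F y s) - (G x s - G y s)‖ := by
        congr 1; abel
    _ ≤ ‖F x s - F y s‖ + ‖G x s - G y s‖ := norm_sub_le _ _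
    _ ≤ (C + D) * dist x y := by linarith [hC x y s hs, hD x y s hs]

theorem comp {Y : Type*} [PseudoMetricSpace Y] (hF : UniformlyLipschitzOn F A) {g : Y → X}
    {K : NNReal} (hg : LipschitzWith K g) : UniformlyLipschitzOn (fun y => F (g y)) A := by
  obtain ⟨C, hC⟩ := hF
  refine ⟨max C 0 * K, fun x y s hs => ?_⟩
  calc ‖F (g x) s - F (g y) s‖ ≤ max C 0 * dist (g x) (g y) :=
        (hC _ _ s hs).trans (mul_le_mul_of_nonneg_right (le_max_left _ _) dist_nonneg)
    _ ≤ max C 0 * K * dist x y := by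
        rw [mul_assoc]; exact mul_le_mul_of_nonneg_left (hg.dist_le_mul x y) (le_max_right _ _)

theorem primitive [NormedSpace ℝ E] {L : ℝ} (hF : UniformlyLipschitzOn F (Icc 0 L))
    (hint : ∀ x, IntegrableOn (F x) (Icc 0 L)) :
    UniformlyLipschitzOn (fun x => _root_.primitive (F x)) (Icc 0 L) := by
  obtain ⟨C, hC⟩ := hF
  refine ⟨C * L, fun x y s hs => ?_⟩
  have hsub : Ioc 0 s ⊆ Icc 0 L := Ioc_subset_Icc_self.trans (Icc_subset_Icc_right hs.2)
  have hCxy : 0 ≤ C * dist x y := (norm_nonneg _).trans (hC x y s hs)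
  calc ‖_root_.primitive (F x) s - _root_.primitive (F y) s‖
      = ‖∫ u in Ioc 0 s, (F x u - F y u)‖ := by
        rw [_root_.primitive, _root_.primitive,
          integral_sub ((hint x).mono_set hsub) ((hint y).mono_set hsub)]
    _ ≤ C * dist x y * volume.real (Ioc 0 s) :=
        norm_setIntegral_le_of_norm_le_const measure_Ioc_lt_top fun u hu => hC x y u (hsub hu)
    _ ≤ C * dist x y * L := by
        rw [Real.volume_real_Ioc, max_eq_left (by linarith [hs.1])]
        exact mul_le_mul_of_nonneg_left (by linarith [hs.2]) hCxy
    _ = C * L * dist x y := by ring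

end UniformlyLipschitzOn

theorem uniformlyLipschitzOn_primitive_Lp [NormedSpace ℝ E] (L : ℝ) :
    UniformlyLipschitzOn (fun f : Lp E 2 (volume.restrict (Ioc 0 L)) => primitive f) (Icc 0 L) := by
  refine ⟨√L, fun f g s hs => ?_⟩
  have hsub : Ioc 0 s ⊆ Ioc 0 L := Ioc_subset_Ioc_right hs.2
  have hint : ∀ h : Lp E 2 (volume.restrict (Ioc 0 L)), IntegrableOn h (Ioc 0 L) :=
    fun h => (Lp.memLp h).integrable one_le_two
  calc ‖primitive f s - primitive g s‖ = ‖∫ u in Ioc 0 s, (f - g : Lp E 2 _) u‖ := by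
        rw [primitive, primitive, ← integral_sub ((hint f).mono_set hsub) ((hint g).mono_set hsub)]
        exact congrArg _ (integral_congr_ae
          (ae_restrict_of_ae_restrict_of_subset hsub (Lp.coeFn_sub f g).symm))
    _ ≤ ∫ u in Ioc 0 s, ‖(f - g : Lp E 2 _) u‖ := norm_integral_le_integral_norm _
    _ ≤ ∫ u in Ioc 0 L, ‖(f - g : Lp E 2 _) u‖ :=
        setIntegral_mono_set (hint _).norm (Eventually.of_forall fun _ => norm_nonneg _)
          hsub.eventuallyLE
    _ ≤ √L * dist f g := by
        have h := Lp.integral_norm_le_sqrt_measure_mul_norm (f - g)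
        rwa [measureReal_restrict_apply_univ, Real.volume_real_Ioc, sub_zero,
          max_eq_left (hs.1.trans hs.2), ← dist_eq_norm] at h

end UniformlyLipschitz

theorem cross3_sub_right (a b c : E3) : cross3 a (b - c) = cross3 a b - cross3 a c :=
  (cross3Bilin a).map_sub b c

theorem UniformlyLipschitzOn.cross3_left {X : Type*} [PseudoMetricSpace X] {F : X → ℝ → E3}
    {A : Set ℝ} {t : ℝ → E3} (hF : UniformlyLipschitzOn F A) (hA : IsCompact A)
    (ht : ContinuousOn t A) : UniformlyLipschitzOn (fun x s => cross3 (t s) (F x s)) A := by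
  obtain ⟨C, hC⟩ := hF
  obtain ⟨K, hK⟩ := hA.exists_bound_of_continuousOn ht
  refine ⟨K * C, fun x y s hs => ?_⟩
  rw [← cross3_sub_right, mul_assoc]
  exact (norm_cross3_le _ _).trans
    (mul_le_mul (hK s hs) (hC x y s hs) (norm_nonneg _) ((norm_nonneg _).trans (hK s hs)))

theorem ContinuousOn.cross3 {A : Set ℝ} {f g : ℝ → E3} (hf : ContinuousOn f A)
    (hg : ContinuousOn g A) : ContinuousOn (fun s => cross3 (f s) (g s)) A :=
  cross3Bilin.continuous₂.comp_continuousOn (hf.prodMk hg)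

theorem integral_cross3_const {α : Type*} [MeasurableSpace α] {μ : Measure α} {f : α → E3}
    (hf : Integrable f μ) (b : E3) : ∫ u, cross3 (f u) b ∂μ = cross3 (∫ u, f u ∂μ) b :=
  (cross3Bilin.flip b).integral_comp_comm hf

section SquareIntegrable

variable {L : ℝ} {f : ℝ → E3}

theorem integrableOn_Icc_of_memLp (hf : MemLp f 2 (volume.restrict (Ioc 0 L))) :
    IntegrableOn f (Icc 0 L) :=
  (integrableOn_Icc_iff_integrableOn_Ioc (by simp)).2 (hf.integrable one_le_two)

theorem sqIntOn_iff_memLp : SqIntOn f L ↔ MemLp f 2 (volume.restrict (Ioc 0 L)) :=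
  ⟨fun h => (memLp_two_iff_integrable_sq_norm h.1.aestronglyMeasurable).2 h.2,
    fun h => ⟨h.integrable one_le_two, (memLp_two_iff_integrable_sq_norm h.1).1 h⟩⟩

theorem memLp_of_continuousOn (hf : ContinuousOn f (Icc 0 L)) :
    MemLp f 2 (volume.restrict (Ioc 0 L)) := by
  obtain ⟨C, hC⟩ := isCompact_Icc.exists_bound_of_continuousOn hf
  exact MemLp.of_bound ((hf.mono Ioc_subset_Icc_self).aestronglyMeasurable measurableSet_Ioc) C
    ((ae_restrict_iff' measurableSet_Ioc).2
      (Eventually.of_forall fun s hs => hC s (Ioc_subset_Icc_self hs)))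

end SquareIntegrable

section EdgeSolution

variable {L : ℝ} {t p q : ℝ → E3}

def edgeW (q : ℝ → E3) (b : E3) (s : ℝ) : E3 := b + primitive q s

def edgeDV (t p q : ℝ → E3) (b : E3) (s : ℝ) : E3 := p s - cross3 (t s) (edgeW q b s)

def edgeV (t p q : ℝ → E3) (a b : E3) (s : ℝ) : E3 := a + primitive (edgeDV t p q b) s

def edgeV₀ (t p q : ℝ → E3) (s : ℝ) : E3 :=
  primitive p s - primitive (fun u => cross3 (t u) (primitive q u)) s

@[simp] theorem edgeW_zero (q : ℝ → E3) (b : E3) : edgeW q b 0 = b := by simp [edgeW]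

@[simp] theorem edgeV_zero (t p q : ℝ → E3) (a b : E3) : edgeV t p q a b 0 = a := by
  simp [edgeV]

theorem continuousOn_cross3_primitive (htc : ContinuousOn t (Icc 0 L))
    (hq : IntegrableOn q (Icc 0 L)) :
    ContinuousOn (fun u => cross3 (t u) (primitive q u)) (Icc 0 L) :=
  htc.cross3 (continuousOn_primitive hq)

theorem continuousOn_edgeV₀ (htc : ContinuousOn t (Icc 0 L)) (hp : IntegrableOn p (Icc 0 L))
    (hq : IntegrableOn q (Icc 0 L)) : ContinuousOn (edgeV₀ t p q) (Icc 0 L) :=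
  (continuousOn_primitive hp).sub
    (continuousOn_primitive (continuousOn_cross3_primitive htc hq).integrableOn_Icc)

theorem integrableOn_edgeDV (htc : ContinuousOn t (Icc 0 L)) (hp : IntegrableOn p (Icc 0 L))
    (hq : IntegrableOn q (Icc 0 L)) (b : E3) : IntegrableOn (edgeDV t p q b) (Icc 0 L) :=
  hp.sub (htc.cross3 (continuousOn_const.add (continuousOn_primitive hq))).integrableOn_Icc

theorem edgeV_eq (htc : ContinuousOn t (Icc 0 L)) (hp : IntegrableOn p (Icc 0 L))
    (hq : IntegrableOn q (Icc 0 L)) (a b : E3) {s : ℝ} (hs : s ∈ Icc 0 L) :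
    edgeV t p q a b s = a - cross3 (primitive t s) b + edgeV₀ t p q s := by
  have hsub : Ioc 0 s ⊆ Icc 0 L := Ioc_subset_Icc_self.trans (Icc_subset_Icc_right hs.2)
  have hp' : IntegrableOn p (Ioc 0 s) := hp.mono_set hsub
  have hcross : IntegrableOn (fun u => cross3 (t u) (primitive q u)) (Ioc 0 s) :=
    (continuousOn_cross3_primitive htc hq).integrableOn_Icc.mono_set hsub
  have hdiff : IntegrableOn (fun u => p u - cross3 (t u) (primitive q u)) (Ioc 0 s) :=
    hp'.sub hcross
  have hconst : IntegrableOn (fun u => cross3 (t u) b) (Ioc 0 s) :=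
    (htc.cross3 continuousOn_const).integrableOn_Icc.mono_set hsub
  have hsplit : edgeDV t p q b = fun u => p u - cross3 (t u) (primitive q u) - cross3 (t u) b := by
    funext u
    simp only [edgeDV, edgeW, cross3_add_right]
    abel
  have hcross_const : primitive (fun u => cross3 (t u) b) s = cross3 (primitive t s) b :=
    integral_cross3_const (htc.integrableOn_Icc.mono_set hsub) b
  rw [edgeV, edgeV₀, hsplit, primitive_sub hdiff hconst, primitive_sub hp' hcross, hcross_const]
  abel

theorem h1On_edgeW (hq : MemLp q 2 (volume.restrict (Ioc 0 L))) (b : E3) :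
    H1On L (edgeW q b) q :=
  ⟨continuousOn_const.add (continuousOn_primitive (integrableOn_Icc_of_memLp hq)),
    sqIntOn_iff_memLp.2 hq, fun _ _ => by rw [edgeW_zero]; rfl⟩

theorem h1On_edgeV (htc : ContinuousOn t (Icc 0 L)) (hp : MemLp p 2 (volume.restrict (Ioc 0 L)))
    (hq : IntegrableOn q (Icc 0 L)) (a b : E3) :
    H1On L (edgeV t p q a b) (edgeDV t p q b) := by
  refine ⟨continuousOn_const.add
      (continuousOn_primitive (integrableOn_edgeDV htc (integrableOn_Icc_of_memLp hp) hq b)),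
    sqIntOn_iff_memLp.2 (hp.sub (memLp_of_continuousOn ?_)), fun _ _ => by rw [edgeV_zero]; rfl⟩
  exact htc.cross3 (continuousOn_const.add (continuousOn_primitive hq))

theorem eqOn_edgeW {w dw : ℝ → E3} (hw : H1On L w dw)
    (hq : q =ᵐ[volume.restrict (Ioc 0 L)] dw) : EqOn w (edgeW q (w 0)) (Icc 0 L) := fun s hs => by
  rw [hw.2.2 s hs, edgeW, primitive]
  exact congrArg _ (integral_congr_ae
    (ae_restrict_of_ae_restrict_of_subset (Ioc_subset_Ioc_right hs.2) hq.symm))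

theorem eqOn_edgeV {v dv w dw : ℝ → E3} (hv : H1On L v dv) (hw : H1On L w dw)
    (hp : p =ᵐ[volume.restrict (Ioc 0 L)] fun s => dv s + cross3 (t s) (w s))
    (hq : q =ᵐ[volume.restrict (Ioc 0 L)] dw) :
    EqOn v (edgeV t p q (v 0) (w 0)) (Icc 0 L) := fun s hs => by
  have hsub : Ioc 0 s ⊆ Ioc 0 L := Ioc_subset_Ioc_right hs.2
  rw [hv.2.2 s hs, edgeV, primitive]
  refine congrArg _ (integral_congr_ae ?_)
  filter_upwards [ae_restrict_of_ae_restrict_of_subset hsub hp, ae_restrict_mem measurableSet_Ioc]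
    with u hpu hu
  rw [edgeDV, hpu, ← eqOn_edgeW hw hq (Ioc_subset_Icc_self (hsub hu)), add_sub_cancel_right]

theorem integral_edgeW (hL : 0 ≤ L) (hq : IntegrableOn q (Icc 0 L)) (b : E3) :
    ∫ s in Ioc 0 L, edgeW q b s = L • b + primitive (primitive q) L := by
  have hprim : IntegrableOn (primitive q) (Ioc 0 L) :=
    (continuousOn_primitive hq).integrableOn_Icc.mono_set Ioc_subset_Icc_self
  have hconst : IntegrableOn (fun _ => b) (Ioc 0 L) := integrableOn_const measure_Ioc_lt_top.ne
  simp only [edgeW]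
  rw [integral_add hconst hprim, setIntegral_const,
    Real.volume_real_Ioc_of_le hL, sub_zero]
  rfl

theorem integral_edgeV (hL : 0 ≤ L) (htc : ContinuousOn t (Icc 0 L))
    (hp : IntegrableOn p (Icc 0 L)) (hq : IntegrableOn q (Icc 0 L)) (a b : E3) :
    ∫ s in Ioc 0 L, edgeV t p q a b s
      = L • a - cross3 (primitive (primitive t) L) b + primitive (edgeV₀ t p q) L := by
  have hprim : IntegrableOn (primitive t) (Ioc 0 L) :=
    (continuousOn_primitive htc.integrableOn_Icc).integrableOn_Icc.mono_set Ioc_subset_Icc_self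
  have hcross : IntegrableOn (fun s => cross3 (primitive t s) b) (Ioc 0 L) :=
    ((continuousOn_primitive htc.integrableOn_Icc).cross3 continuousOn_const).integrableOn_Icc
      |>.mono_set Ioc_subset_Icc_self
  have hconst : IntegrableOn (fun _ => a) (Ioc 0 L) := integrableOn_const measure_Ioc_lt_top.ne
  have hdiff : IntegrableOn (fun s => a - cross3 (primitive t s) b) (Ioc 0 L) := hconst.sub hcross
  have hV₀ : IntegrableOn (edgeV₀ t p q) (Ioc 0 L) :=
    (continuousOn_edgeV₀ htc hp hq).integrableOn_Icc.mono_set Ioc_subset_Icc_self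
  rw [setIntegral_congr_fun measurableSet_Ioc
      fun s hs => edgeV_eq htc hp hq a b (Ioc_subset_Icc_self hs),
    integral_add hdiff hV₀, integral_sub hconst hcross, integral_cross3_const hprim,
    setIntegral_const, Real.volume_real_Ioc_of_le hL, sub_zero]
  rfl

end EdgeSolution

theorem UniformlyLipschitzOn.edgeV₀ {X : Type*} [PseudoMetricSpace X] {L : ℝ} {t : ℝ → E3}
    (htc : ContinuousOn t (Icc 0 L)) {P Q : X → Lp E3 2 (volume.restrict (Ioc 0 L))}
    {KP KQ : NNReal} (hP : LipschitzWith KP P) (hQ : LipschitzWith KQ Q) :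
    UniformlyLipschitzOn (fun x => edgeV₀ t (P x) (Q x)) (Icc 0 L) :=
  ((uniformlyLipschitzOn_primitive_Lp L).comp hP).sub
    ((((uniformlyLipschitzOn_primitive_Lp L).comp hQ).cross3_left isCompact_Icc htc).primitive
      fun x => (continuousOn_cross3_primitive htc
        (integrableOn_Icc_of_memLp (Lp.memLp (Q x)))).integrableOn_Icc)

section Network

abbrev EdgeL2 (l : Fin nE → ℝ) : Type :=
  ∀ i : Fin nE, Lp E3 2 (volume.restrict (Ioc 0 (l i)))

abbrev BoundaryData (nE : ℕ) : Type :=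
  (Fin nE → E3) × (Fin nE → E3) × (Fin nE → E3) × (Fin nE → E3) × E3 × E3

abbrev InitialVertexData (nE nV : ℕ) : Type :=
  (Fin nE → E3) × (Fin nE → E3) × (Fin nV → E3) × (Fin nV → E3)

variable (tail head : Fin nE → Fin nV) (l : Fin nE → ℝ) (t : Fin nE → ℝ → E3)

def networkTrace (v w : Fin nE → ℝ → E3) (V W : Fin nV → E3) : BoundaryData nE :=
  (fun i => v i (l i) - V (head i), fun i => v i 0 - V (tail i),
    fun i => w i (l i) - W (head i), fun i => w i 0 - W (tail i),
    ∑ i, ∫ s in Ioc 0 (l i), v i s, ∑ i, ∫ s in Ioc 0 (l i), w i s)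

def traceMap : InitialVertexData nE nV →ₗ[ℝ] BoundaryData nE where
  toFun d :=
    (fun i => d.1 i - cross3 (primitive (t i) (l i)) (d.2.1 i) - d.2.2.1 (head i),
      fun i => d.1 i - d.2.2.1 (tail i),
      fun i => d.2.1 i - d.2.2.2 (head i), fun i => d.2.1 i - d.2.2.2 (tail i),
      ∑ i, (l i • d.1 i - cross3 (primitive (primitive (t i)) (l i)) (d.2.1 i)),
      ∑ i, l i • d.2.1 i)
  map_add' d e := by
    simp only [Prod.fst_add, Prod.snd_add, Pi.add_apply, cross3_add_right, smul_add,
      Prod.mk_add_mk, ← Finset.sum_add_distrib, Prod.mk.injEq, funext_iff]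
    refine ⟨fun i => by abel, fun i => by abel, fun i => by abel, fun i => by abel,
      Finset.sum_congr rfl fun i _ => by abel, trivial⟩
  map_smul' r d := by
    simp [cross3_smul_right, smul_sub, Finset.smul_sum, smul_comm r, funext_iff]

def traceOffset (p q : EdgeL2 l) : BoundaryData nE :=
  (fun i => edgeV₀ (t i) (p i) (q i) (l i), 0, fun i => primitive (q i) (l i), 0,
    ∑ i, primitive (edgeV₀ (t i) (p i) (q i)) (l i), ∑ i, primitive (primitive (q i)) (l i))

variable {tail head l t}

theorem networkTrace_congr (hl : ∀ i, 0 ≤ l i) {v v' w w' : Fin nE → ℝ → E3}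
    (hv : ∀ i, EqOn (v i) (v' i) (Icc 0 (l i))) (hw : ∀ i, EqOn (w i) (w' i) (Icc 0 (l i)))
    (V W : Fin nV → E3) :
    networkTrace tail head l v w V W = networkTrace tail head l v' w' V W := by
  have hint : ∀ f f' : Fin nE → ℝ → E3, (∀ i, EqOn (f i) (f' i) (Icc 0 (l i))) →
      ∀ i, ∫ s in Ioc 0 (l i), f i s = ∫ s in Ioc 0 (l i), f' i s := fun f f' h i =>
    setIntegral_congr_fun measurableSet_Ioc ((h i).mono Ioc_subset_Icc_self)
  simp only [networkTrace, fun i => hv i (left_mem_Icc.2 (hl i)),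
    fun i => hv i (right_mem_Icc.2 (hl i)), fun i => hw i (left_mem_Icc.2 (hl i)),
    fun i => hw i (right_mem_Icc.2 (hl i)), hint v v' hv, hint w w' hw]

theorem networkTrace_edgeSolution (hl : ∀ i, 0 ≤ l i)
    (htc : ∀ i, ContinuousOn (t i) (Icc 0 (l i))) (p q : EdgeL2 l)
    (d : InitialVertexData nE nV) :
    networkTrace tail head l (fun i => edgeV (t i) (p i) (q i) (d.1 i) (d.2.1 i))
        (fun i => edgeW (q i) (d.2.1 i)) d.2.2.1 d.2.2.2
      = traceMap tail head l t d + traceOffset l t p q := by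
  have hp : ∀ i, IntegrableOn (p i) (Icc 0 (l i)) := fun i =>
    integrableOn_Icc_of_memLp (Lp.memLp _)
  have hq : ∀ i, IntegrableOn (q i) (Icc 0 (l i)) := fun i =>
    integrableOn_Icc_of_memLp (Lp.memLp _)
  simp only [networkTrace, traceMap, traceOffset, LinearMap.coe_mk, AddHom.coe_mk, edgeV_zero,
    edgeW_zero,
    fun i => edgeV_eq (htc i) (hp i) (hq i) (d.1 i) (d.2.1 i) (right_mem_Icc.2 (hl i)),
    fun i => integral_edgeV (hl i) (htc i) (hp i) (hq i) (d.1 i) (d.2.1 i),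
    fun i => integral_edgeW (hl i) (hq i) (d.2.1 i), Prod.mk_add_mk, ← Finset.sum_add_distrib,
    Prod.mk.injEq]
  refine ⟨funext fun i => ?_, (add_zero _).symm, funext fun i => ?_, (add_zero _).symm, trivial⟩
  · rw [Pi.add_apply]
    abel
  · rw [Pi.add_apply, edgeW]
    abel

theorem isClosed_range_traceMap :
    IsClosed (LinearMap.range (traceMap tail head l t) : Set (BoundaryData nE)) := by
  -- left to unification inside `closed_of_finiteDimensional`, this instance search times out
  have : ContinuousSMul ℝ (BoundaryData nE) := inferInstance
  exact Submodule.closed_of_finiteDimensional _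

theorem exists_networkSolution_iff (hl : ∀ i, 0 ≤ l i)
    (htc : ∀ i, ContinuousOn (t i) (Icc 0 (l i))) (p q : EdgeL2 l) (y : BoundaryData nE) :
    (∃ (v dv w dw : Fin nE → ℝ → E3) (V W : Fin nV → E3),
      (∀ i, H1On (l i) (v i) (dv i)) ∧ (∀ i, H1On (l i) (w i) (dw i)) ∧
      (∀ i, (p i : ℝ → E3) =ᵐ[volume.restrict (Ioc 0 (l i))]
        fun s => dv i s + cross3 (t i s) (w i s)) ∧
      (∀ i, (q i : ℝ → E3) =ᵐ[volume.restrict (Ioc 0 (l i))] dw i) ∧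
      y = networkTrace tail head l v w V W) ↔
    y - traceOffset l t p q ∈ LinearMap.range (traceMap tail head l t) := by
  constructor
  · rintro ⟨v, dv, w, dw, V, W, hv, hw, hp, hq, rfl⟩
    refine ⟨(fun i => v i 0, fun i => w i 0, V, W), ?_⟩
    rw [eq_sub_iff_add_eq, ← networkTrace_edgeSolution hl htc]
    exact (networkTrace_congr hl (fun i => eqOn_edgeV (hv i) (hw i) (hp i) (hq i))
      (fun i => eqOn_edgeW (hw i) (hq i)) V W).symm
  · rintro ⟨d, hd⟩
    refine ⟨fun i => edgeV (t i) (p i) (q i) (d.1 i) (d.2.1 i),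
      fun i => edgeDV (t i) (p i) (q i) (d.2.1 i), fun i => edgeW (q i) (d.2.1 i), fun i => q i,
      d.2.2.1, d.2.2.2,
      fun i => h1On_edgeV (htc i) (Lp.memLp _) (integrableOn_Icc_of_memLp (Lp.memLp _)) _ _,
      fun i => h1On_edgeW (Lp.memLp _) _,
      fun i => Eventually.of_forall fun s => (sub_add_cancel _ _).symm, fun i => ae_eq_refl _, ?_⟩
    rw [networkTrace_edgeSolution hl htc, hd, sub_add_cancel]

theorem continuous_traceOffset (hl : ∀ i, 0 ≤ l i)
    (htc : ∀ i, ContinuousOn (t i) (Icc 0 (l i))) :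
    Continuous fun pq : EdgeL2 l × EdgeL2 l => traceOffset l t pq.1 pq.2 := by
  have hV₀ : ∀ i, UniformlyLipschitzOn
      (fun pq : EdgeL2 l × EdgeL2 l => edgeV₀ (t i) (pq.1 i) (pq.2 i)) (Icc 0 (l i)) := fun i =>
    .edgeV₀ (htc i) ((LipschitzWith.eval i).comp LipschitzWith.prod_fst)
      ((LipschitzWith.eval i).comp LipschitzWith.prod_snd)
  have hW : ∀ i, UniformlyLipschitzOn
      (fun pq : EdgeL2 l × EdgeL2 l => primitive (pq.2 i)) (Icc 0 (l i)) := fun i =>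
    (uniformlyLipschitzOn_primitive_Lp (l i)).comp
      ((LipschitzWith.eval i).comp LipschitzWith.prod_snd)
  have hend : ∀ i, l i ∈ Icc 0 (l i) := fun i => right_mem_Icc.2 (hl i)
  refine .prodMk (continuous_pi fun i => (hV₀ i).continuous_apply (hend i))
    (.prodMk continuous_const (.prodMk (continuous_pi fun i => (hW i).continuous_apply (hend i))
      (.prodMk continuous_const (.prodMk ?_ ?_))))
  · exact continuous_finsetSum _ fun i _ => ((hV₀ i).primitive fun pq =>
      (continuousOn_edgeV₀ (htc i) (integrableOn_Icc_of_memLp (Lp.memLp _))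
        (integrableOn_Icc_of_memLp (Lp.memLp _))).integrableOn_Icc).continuous_apply (hend i)
  · exact continuous_finsetSum _ fun i _ => ((hW i).primitive fun pq =>
      (continuousOn_primitive (integrableOn_Icc_of_memLp (Lp.memLp _))).integrableOn_Icc
        ).continuous_apply (hend i)

end Network

theorem stent_range_BT_closed_general
    (tail head : Fin nE → Fin nV) (l : Fin nE → ℝ)
    (hl : ∀ i, 0 < l i)
    (t : Fin nE → ℝ → E3)
    (htc : ∀ i, ContinuousOn (t i) (Set.Icc 0 (l i))) :
    IsClosed {x :
        (∀ i : Fin nE, Lp E3 2 (volume.restrict (Set.Ioc 0 (l i)))) ×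
        (∀ i : Fin nE, Lp E3 2 (volume.restrict (Set.Ioc 0 (l i)))) ×
        (Fin nE → E3) × (Fin nE → E3) × (Fin nE → E3) × (Fin nE → E3) × E3 × E3 |
      ∃ (v dv w dw : Fin nE → ℝ → E3) (V W : Fin nV → E3),
        (∀ i, H1On (l i) (v i) (dv i)) ∧ (∀ i, H1On (l i) (w i) (dw i)) ∧
        (∀ i, (x.1 i : ℝ → E3) =ᵐ[volume.restrict (Set.Ioc 0 (l i))]
            fun s => dv i s + cross3 (t i s) (w i s)) ∧
        (∀ i, (x.2.1 i : ℝ → E3) =ᵐ[volume.restrict (Set.Ioc 0 (l i))] dw i) ∧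
        (∀ i, x.2.2.1 i = v i (l i) - V (head i)) ∧
        (∀ i, x.2.2.2.1 i = v i 0 - V (tail i)) ∧
        (∀ i, x.2.2.2.2.1 i = w i (l i) - W (head i)) ∧
        (∀ i, x.2.2.2.2.2.1 i = w i 0 - W (tail i)) ∧
        x.2.2.2.2.2.2.1 = (∑ i, ∫ s in Set.Ioc 0 (l i), v i s) ∧
        x.2.2.2.2.2.2.2 = (∑ i, ∫ s in Set.Ioc 0 (l i), w i s)} := by
  have hl' : ∀ i, 0 ≤ l i := fun i => (hl i).le
  have hresidual : Continuous fun x : EdgeL2 l × EdgeL2 l × BoundaryData nE =>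
      x.2.2 - traceOffset l t x.1 x.2.1 :=
    continuous_snd.snd.sub
      ((continuous_traceOffset hl' htc).comp (continuous_fst.prodMk continuous_snd.fst))
  convert isClosed_range_traceMap.preimage hresidual using 1
  ext x
  rw [mem_preimage, SetLike.mem_coe,
    ← exists_networkSolution_iff (tail := tail) (head := head) hl' htc]
  simp only [networkTrace, Prod.ext_iff, funext_iff, mem_ofPred_eq]

/-- The range of Bᵀ is closed. -/
theorem stent_range_BT_closed
    (tail head : Fin nE → Fin nV) (l : Fin nE → ℝ)
    (hl : ∀ i, 0 < l i) (hconn : EdgeConn tail head)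
    (Φ t : Fin nE → ℝ → E3)
    (hΦ : ∀ i, ∀ s ∈ Set.Icc 0 (l i), HasDerivWithinAt (Φ i) (t i s) (Set.Icc 0 (l i)) s)
    (htc : ∀ i, ContinuousOn (t i) (Set.Icc 0 (l i)))
    (htu : ∀ i, ∀ s ∈ Set.Icc 0 (l i), ‖t i s‖ = 1) :
    IsClosed {x :
        (∀ i : Fin nE, Lp E3 2 (volume.restrict (Set.Ioc 0 (l i)))) ×
        (∀ i : Fin nE, Lp E3 2 (volume.restrict (Set.Ioc 0 (l i)))) ×
        (Fin nE → E3) × (Fin nE → E3) × (Fin nE → E3) × (Fin nE → E3) × E3 × E3 |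
      ∃ (v dv w dw : Fin nE → ℝ → E3) (V W : Fin nV → E3),
        (∀ i, H1On (l i) (v i) (dv i)) ∧ (∀ i, H1On (l i) (w i) (dw i)) ∧
        (∀ i, (x.1 i : ℝ → E3) =ᵐ[volume.restrict (Set.Ioc 0 (l i))]
            fun s => dv i s + cross3 (t i s) (w i s)) ∧
        (∀ i, (x.2.1 i : ℝ → E3) =ᵐ[volume.restrict (Set.Ioc 0 (l i))] dw i) ∧
        (∀ i, x.2.2.1 i = v i (l i) - V (head i)) ∧
        (∀ i, x.2.2.2.1 i = v i 0 - V (tail i)) ∧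
        (∀ i, x.2.2.2.2.1 i = w i (l i) - W (head i)) ∧
        (∀ i, x.2.2.2.2.2.1 i = w i 0 - W (tail i)) ∧
        x.2.2.2.2.2.2.1 = (∑ i, ∫ s in Set.Ioc 0 (l i), v i s) ∧
        x.2.2.2.2.2.2.2 = (∑ i, ∫ s in Set.Ioc 0 (l i), w i s)} :=
  stent_range_BT_closed_general tail head l hl t htc

end
end

section
/- Canonical form of the structured matrix pair: let n₁, n₂, n₃, n₄ be nonnegative integers, and let E, K be the real square matrices of size n₁+n₂+n₃+n₄ with block structure E = diag(0, 0, M, 0) and K = [[A₁₁, 0, 0, B₄₁ᵀ], [0, 0, B₃₂ᵀ, B₄₂ᵀ], [0, B₃₂, 0, 0], [B₄₁, B₄₂, 0, 0]], where M ∈ ℝ^{n₃×n₃} is symmetric positive definite, A₁₁ ∈ ℝ^{n₁×n₁} is symmetric positive semidefinite, B₃₂ ∈ ℝ^{n₃×n₂}, B₄₁ ∈ ℝ^{n₄×n₁}, B₄₂ ∈ ℝ^{n₄×n₂}. Assume K is invertible and that the matrix A = diag(A₁₁, 0) ∈ ℝ^{(n₁+n₂)×(n₁+n₂)} is positive definite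 on the kernel of B = [[0, B₃₂], [B₄₁, B₄₂]] ∈ ℝ^{(n₃+n₄)×(n₁+n₂)} (i.e., xᵀAx > 0 for every nonzero x with Bx = 0). Then there exists an invertible matrix V such that, with respect to a block partition into five blocks of sizes n₄, n₃, n₁+n₂−n₃−n₄, n₃, n₄: (i) VᵀEV = diag(0, 0, 0, M, 0); (ii) VᵀKV = [[0, 0, 0, 0, B̂₅₁ᵀ], [0, Â₂₂, 0, B̂₄₂ᵀ, 0], [0, 0, Â₃₃, 0, 0], [0, B̂₄₂, 0, 0, 0], [B̂₅₁, 0, 0, 0, 0]] with Â₃₃ symmetric and B̂₄₂ ∈ ℝ^{n₃×n₃}, B̂₅₁ ∈ ℝ^{n₄×n₄} invertible; (iii) for every F₃ ∈ ℝ^{n₃}, Vᵀ applied to the block vector (0, 0, F₃, 0) equals the block vector (0, 0, 0, F₃, 0). -/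
/-!
With `A = diag(A₁₁, 0)` and `B = [[0, B₃₂], [B₄₁, B₄₂]]`, `K` is the saddle point matrix
`[[A, Bᵀ], [B, 0]]`. A right inverse of `K` provides `W, Y` with `A W + Bᵀ Y = 0` and `B W = 1`.
So `B` is onto, `ker B` has dimension `n₁ + n₂ - n₃ - n₄`, and a matrix `Z` whose columns form a
basis of `ker B` satisfies `Zᵀ A W = -(B Z)ᵀ Y = 0`. Splitting `W = [W₃ W₄]` along the rows of `B`,
take `V` with the block columns `(W₄; 0, P)`, `(W₃; 0, Q)`, `(Z; 0)`, `(0; 1, 0)`, `(0; 0, 1)`.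
Since `B W₃`, `B W₄`, `B Z` are `(1; 0)`, `(0; 1)`, `0`, every block of `VᵀKV` is explicit, and
`P = -½ W₄ᵀ A W₄`, `Q = -W₄ᵀ A W₃` cancel the two couplings left over; this gives the canonical
form with `B̂₄₂ = B̂₅₁ = 1`. Applying `B` to `V c = 0` shows that the `W`-coordinates of `c`
vanish, then injectivity of `Z` finishes, so the square matrix `V` is invertible.
-/

open Matrix

namespace Matrix

def saddlePoint {m p R : Type*} [Zero R] (A : Matrix m m R) (B : Matrix p m R) :
    Matrix (m ⊕ p) (m ⊕ p) R :=
  fromBlocks A Bᵀ B 0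

section SaddlePoint

variable {m p R : Type*} [Fintype m] [Fintype p] [CommRing R]

theorem exists_mul_eq_one_of_isUnit_saddlePoint [DecidableEq m] [DecidableEq p]
    {A : Matrix m m R} {B : Matrix p m R} (hK : IsUnit (saddlePoint A B)) :
    ∃ (W : Matrix m p R) (Y : Matrix p p R), A * W + Bᵀ * Y = 0 ∧ B * W = 1 := by
  obtain ⟨K', hK'⟩ := hK.exists_right_inv
  rw [← fromBlocks_toBlocks K', saddlePoint, fromBlocks_multiply, ← fromBlocks_one] at hK'
  obtain ⟨-, hAW, -, hBW⟩ := fromBlocks_inj.mp hK'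
  exact ⟨K'.toBlocks₁₂, K'.toBlocks₂₂, hAW, by simpa using hBW⟩

theorem transpose_mul_mul_eq_zero_of_add_mul_eq_zero {n q : Type*} {A : Matrix m m R}
    {B : Matrix p m R} {W : Matrix m n R} {Y : Matrix p n R} {Z : Matrix m q R}
    (hAW : A * W + Bᵀ * Y = 0) (hZ : B * Z = 0) : Zᵀ * A * W = 0 := by
  rw [Matrix.mul_assoc, eq_neg_of_add_eq_zero_left hAW, Matrix.mul_neg, ← Matrix.mul_assoc,
    ← transpose_mul, hZ, transpose_zero, Matrix.zero_mul, neg_zero]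

end SaddlePoint

section Field

variable {m n p K : Type*} [Fintype m] [Fintype n] [Fintype p] [Field K]

theorem card_le_card_of_mul_eq_one [DecidableEq p] {B : Matrix p m K} {W : Matrix m p K}
    (h : B * W = 1) : Fintype.card p ≤ Fintype.card m :=
  calc Fintype.card p = (B * W).rank := by rw [h, rank_one]
    _ ≤ B.rank := rank_mul_le_left B W
    _ ≤ Fintype.card m := rank_le_card_width B

theorem exists_mulVec_injective_mul_eq_zero [DecidableEq p] {B : Matrix p m K}
    {W : Matrix m p K} (h : B * W = 1) {k : ℕ} (hk : Fintype.card p + k = Fintype.card m) :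
    ∃ Z : Matrix m (Fin k) K, B * Z = 0 ∧ Function.Injective Z.mulVec := by
  have hsurj : LinearMap.range B.mulVecLin = ⊤ :=
    LinearMap.range_eq_top.mpr fun y => ⟨W *ᵥ y, by simp [mulVec_mulVec, h]⟩
  have hker : Module.finrank K (LinearMap.ker B.mulVecLin) = k := by
    have := LinearMap.finrank_range_add_finrank_ker B.mulVecLin
    rw [hsurj, finrank_top, Module.finrank_fintype_fun_eq_card,
      Module.finrank_fintype_fun_eq_card] at this
    omega
  let b : Module.Basis (Fin k) K (LinearMap.ker B.mulVecLin) :=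
    Module.finBasisOfFinrankEq K _ hker
  let Z : Matrix m (Fin k) K := of fun i c => (b c).1 i
  refine ⟨Z, ?_, ?_⟩
  · ext i c
    exact congrFun (LinearMap.mem_ker.mp (b c).2) i
  · have hcol : Z.col = (LinearMap.ker B.mulVecLin).subtype ∘ b := rfl
    rw [mulVec_injective_iff, hcol]
    exact b.linearIndependent.map' _ (Submodule.ker_subtype _)

theorem exists_mul_eq_one_of_mulVec_injective [DecidableEq m] [DecidableEq n]
    {V : Matrix m n K} (hcard : Fintype.card m = Fintype.card n)
    (hV : Function.Injective V.mulVec) : ∃ V' : Matrix n m K, V * V' = 1 ∧ V' * V = 1 := by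
  have hsurj : Function.Surjective V.mulVecLin :=
    (LinearMap.injective_iff_surjective_of_finrank_eq_finrank (by simp [hcard])).mp hV
  obtain ⟨V', hV'⟩ := mulVec_surjective_iff_exists_right_inverse.mp hsurj
  exact ⟨V', hV', (mul_eq_one_comm_of_card_eq _ _ _ hcard).mp hV'⟩

end Field

section Congruence

variable {m m₁ m₂ n n' p R : Type*} [Fintype m] [Fintype m₁] [Fintype m₂] [Fintype p]
  [CommRing R]

theorem transpose_fromRows_mul_fromBlocks_mul_fromRows (x : Matrix m₁ n R) (y : Matrix m₂ n R)
    (x' : Matrix m₁ n' R) (y' : Matrix m₂ n' R) (A : Matrix m₁ m₁ R) (B : Matrix m₁ m₂ R)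
    (C : Matrix m₂ m₁ R) (D : Matrix m₂ m₂ R) :
    (fromRows x y)ᵀ * fromBlocks A B C D * fromRows x' y' =
      xᵀ * A * x' + xᵀ * B * y' + yᵀ * C * x' + yᵀ * D * y' := by
  rw [transpose_fromRows, fromCols_mul_fromBlocks, fromCols_mul_fromRows]
  simp only [Matrix.add_mul]
  abel

theorem transpose_fromCols_mul_mul_fromCols (V₁ : Matrix m n R) (V₂ : Matrix m n' R)
    (X : Matrix m m R) :
    (fromCols V₁ V₂)ᵀ * X * fromCols V₁ V₂ =
      fromBlocks (V₁ᵀ * X * V₁) (V₁ᵀ * X * V₂) (V₂ᵀ * X * V₁) (V₂ᵀ * X * V₂) := by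
  simp [transpose_fromCols]

theorem IsSymm.transpose_transpose_mul_mul {A : Matrix m m R} (hA : A.IsSymm) (x : Matrix m n R)
    (y : Matrix m n' R) : (xᵀ * A * y)ᵀ = yᵀ * A * x := by
  rw [transpose_mul, transpose_mul, hA.eq, transpose_transpose, Matrix.mul_assoc]

theorem transpose_fromRows_mul_saddlePoint_mul_fromRows (x : Matrix m n R) (y : Matrix p n R)
    (x' : Matrix m n' R) (y' : Matrix p n' R) (A : Matrix m m R) (B : Matrix p m R) :
    (fromRows x y)ᵀ * saddlePoint A B * fromRows x' y' =
      xᵀ * A * x' + (B * x)ᵀ * y' + yᵀ * (B * x') := by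
  rw [saddlePoint, transpose_fromRows_mul_fromBlocks_mul_fromRows, transpose_mul,
    Matrix.mul_assoc yᵀ]
  simp

end Congruence

section CanonicalForm

variable {m p₃ p₄ r R : Type*} [DecidableEq p₃] [DecidableEq p₄] [CommRing R]

def canonicalTransform (W₃ : Matrix m p₃ R) (W₄ : Matrix m p₄ R) (Z : Matrix m r R)
    (P : Matrix p₄ p₄ R) (Q : Matrix p₄ p₃ R) :
    Matrix (m ⊕ (p₃ ⊕ p₄)) (p₄ ⊕ (p₃ ⊕ (r ⊕ (p₃ ⊕ p₄)))) R :=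
  fromCols (fromRows W₄ (fromRows 0 P))
    (fromCols (fromRows W₃ (fromRows 0 Q))
      (fromCols (fromRows Z 0) (fromCols (fromRows 0 (fromRows 1 0)) (fromRows 0 (fromRows 0 1)))))

variable [Fintype m]

theorem mul_fromCols_eq_one_iff {B : Matrix (p₃ ⊕ p₄) m R} {W₃ : Matrix m p₃ R}
    {W₄ : Matrix m p₄ R} :
    B * fromCols W₃ W₄ = 1 ↔ B * W₃ = fromRows 1 0 ∧ B * W₄ = fromRows 0 1 := by
  rw [mul_fromCols, ← fromBlocks_one, ← fromCols_fromRows_eq_fromBlocks, fromCols_ext_iff]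

variable [Fintype p₃] [Fintype p₄] {A : Matrix m m R} {B : Matrix (p₃ ⊕ p₄) m R} {W₃ : Matrix m p₃ R}
  {W₄ : Matrix m p₄ R} {Z : Matrix m r R} {P : Matrix p₄ p₄ R} {Q : Matrix p₄ p₃ R}

theorem canonicalTransform_transpose_mul_saddlePoint_mul (hA : A.IsSymm)
    (hW : B * fromCols W₃ W₄ = 1) (hZ : B * Z = 0) (hZA : Zᵀ * A * fromCols W₃ W₄ = 0)
    (hP : W₄ᵀ * A * W₄ + P + Pᵀ = 0) (hQ : W₄ᵀ * A * W₃ + Q = 0) :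
    (canonicalTransform W₃ W₄ Z P Q)ᵀ * saddlePoint A B * canonicalTransform W₃ W₄ Z P Q =
      fromBlocks 0 (fromCols 0 (fromCols 0 (fromCols 0 1)))
        (fromRows 0 (fromRows 0 (fromRows 0 1)))
        (fromBlocks (W₃ᵀ * A * W₃) (fromCols 0 (fromCols 1 0)) (fromRows 0 (fromRows 1 0))
          (fromBlocks (Zᵀ * A * Z) 0 0 0)) := by
  obtain ⟨hW₃, hW₄⟩ := mul_fromCols_eq_one_iff.mp hW
  have hZW : fromCols (Zᵀ * A * W₃) (Zᵀ * A * W₄) = fromCols 0 0 := by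
    rw [← mul_fromCols, hZA, fromCols_zero]
  obtain ⟨hZW₃, hZW₄⟩ := fromCols_inj hZW
  have hW₃Z : W₃ᵀ * A * Z = 0 := by rw [← hA.transpose_transpose_mul_mul, hZW₃, transpose_zero]
  have hW₄Z : W₄ᵀ * A * Z = 0 := by rw [← hA.transpose_transpose_mul_mul, hZW₄, transpose_zero]
  have hQ' : W₃ᵀ * A * W₄ + Qᵀ = 0 := by
    rw [← hA.transpose_transpose_mul_mul, ← transpose_add, hQ, transpose_zero]
  simp only [canonicalTransform, transpose_fromCols_mul_mul_fromCols]
  simp only [transpose_fromCols, fromRows_mul, mul_fromCols,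
    transpose_fromRows_mul_saddlePoint_mul_fromRows]
  simp only [hW₃, hW₄, hZ, hZW₃, hZW₄, hW₃Z, hW₄Z, transpose_fromRows, fromCols_mul_fromRows]
  simp [hP, hQ, hQ']

theorem canonicalTransform_transpose_mul_fromBlocks_mul (M : Matrix p₃ p₃ R) :
    (canonicalTransform W₃ W₄ Z P Q)ᵀ * (fromBlocks 0 0 0 (fromBlocks M 0 0 0) :
        Matrix (m ⊕ (p₃ ⊕ p₄)) (m ⊕ (p₃ ⊕ p₄)) R) * canonicalTransform W₃ W₄ Z P Q =
      fromBlocks 0 0 0 (fromBlocks 0 0 0 (fromBlocks 0 0 0 (fromBlocks M 0 0 0))) := by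
  simp only [canonicalTransform, transpose_fromCols_mul_mul_fromCols]
  simp only [transpose_fromCols, fromRows_mul, mul_fromCols,
    transpose_fromRows_mul_fromBlocks_mul_fromRows]
  simp

theorem canonicalTransform_transpose_mulVec (F : p₃ → R) :
    (canonicalTransform W₃ W₄ Z P Q)ᵀ *ᵥ Sum.elim (0 : m → R) (Sum.elim F (0 : p₄ → R)) =
      Sum.elim (0 : p₄ → R) (Sum.elim (0 : p₃ → R) (Sum.elim (0 : r → R) (Sum.elim F 0))) := by
  simp only [canonicalTransform, transpose_fromCols, fromRows_mulVec, transpose_fromRows,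
    fromCols_mulVec_sumElim]
  simp

theorem canonicalTransform_mulVec_injective [Fintype r] (hW : B * fromCols W₃ W₄ = 1) (hZ : B * Z = 0)
    (hZinj : Function.Injective Z.mulVec) :
    Function.Injective (canonicalTransform W₃ W₄ Z P Q).mulVec := by
  obtain ⟨hW₃, hW₄⟩ := mul_fromCols_eq_one_iff.mp hW
  refine (injective_iff_map_eq_zero (canonicalTransform W₃ W₄ Z P Q).mulVecLin).mpr fun c hc => ?_
  obtain ⟨c₁, c₂, c₃, c₄, c₅, rfl⟩ : ∃ c₁ c₂ c₃ c₄ c₅,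
      c = Sum.elim c₁ (Sum.elim c₂ (Sum.elim c₃ (Sum.elim c₄ c₅))) :=
    ⟨_, _, _, _, _, by ext (i | i | i | i | i) <;> rfl⟩
  simp only [mulVecLin_apply, canonicalTransform, fromCols_mulVec_sumElim, fromRows_mulVec,
    zero_mulVec, one_mulVec, ← Sum.elim_add_add, zero_add, add_zero] at hc
  rw [← Sum.elim_zero_zero, Sum.elim_eq_iff, ← Sum.elim_zero_zero, Sum.elim_eq_iff] at hc
  obtain ⟨hx, rfl, hy⟩ := hc
  have hBx : B *ᵥ (W₄ *ᵥ c₁ + (W₃ *ᵥ c₂ + Z *ᵥ c₃)) = Sum.elim c₂ c₁ := by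
    simp [mulVec_add, mulVec_mulVec, hW₃, hW₄, hZ, ← Sum.elim_add_add]
  rw [hx, mulVec_zero, ← Sum.elim_zero_zero, Sum.elim_eq_iff] at hBx
  obtain ⟨rfl, rfl⟩ := hBx
  obtain rfl : c₃ = 0 := hZinj (by simpa using hx)
  obtain rfl : c₅ = 0 := by simpa using hy
  simp

end CanonicalForm

end Matrix

theorem dae_canonical_form_general (n1 n2 n3 n4 : ℕ)
    (M : Matrix (Fin n3) (Fin n3) ℝ) (A11 : Matrix (Fin n1) (Fin n1) ℝ)
    (B32 : Matrix (Fin n3) (Fin n2) ℝ) (B41 : Matrix (Fin n4) (Fin n1) ℝ)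
    (B42 : Matrix (Fin n4) (Fin n2) ℝ)
    (hA11 : A11.PosSemidef)
    (hK : IsUnit (Matrix.fromBlocks
      (Matrix.fromBlocks A11 0 0 0) (Matrix.fromBlocks 0 B41ᵀ B32ᵀ B42ᵀ)
      (Matrix.fromBlocks 0 B32 B41 B42) 0)) :
    ∃ (V : Matrix ((Fin n1 ⊕ Fin n2) ⊕ (Fin n3 ⊕ Fin n4))
          (Fin n4 ⊕ (Fin n3 ⊕ (Fin (n1 + n2 - n3 - n4) ⊕ (Fin n3 ⊕ Fin n4)))) ℝ)
      (V' : Matrix (Fin n4 ⊕ (Fin n3 ⊕ (Fin (n1 + n2 - n3 - n4) ⊕ (Fin n3 ⊕ Fin n4))))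
          ((Fin n1 ⊕ Fin n2) ⊕ (Fin n3 ⊕ Fin n4)) ℝ),
      V * V' = 1 ∧ V' * V = 1 ∧
      ∃ (A22 : Matrix (Fin n3) (Fin n3) ℝ)
        (A33 : Matrix (Fin (n1 + n2 - n3 - n4)) (Fin (n1 + n2 - n3 - n4)) ℝ)
        (B42h : Matrix (Fin n3) (Fin n3) ℝ) (B51h : Matrix (Fin n4) (Fin n4) ℝ),
        A33.IsSymm ∧ IsUnit B42h ∧ IsUnit B51h ∧
        -- (i) the transformed E
        Vᵀ * (Matrix.fromBlocks 0 0 0 (Matrix.fromBlocks M 0 0 0) :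
            Matrix ((Fin n1 ⊕ Fin n2) ⊕ (Fin n3 ⊕ Fin n4)) ((Fin n1 ⊕ Fin n2) ⊕ (Fin n3 ⊕ Fin n4)) ℝ) * V =
          Matrix.fromBlocks 0 0 0 (Matrix.fromBlocks 0 0 0
            (Matrix.fromBlocks 0 0 0 (Matrix.fromBlocks M 0 0 0))) ∧
        -- (ii) the transformed K
        Vᵀ * (Matrix.fromBlocks
            (Matrix.fromBlocks A11 0 0 0) (Matrix.fromBlocks 0 B41ᵀ B32ᵀ B42ᵀ)
            (Matrix.fromBlocks 0 B32 B41 B42) 0) * V =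
          Matrix.fromBlocks 0
            (Matrix.fromCols 0 (Matrix.fromCols 0 (Matrix.fromCols 0 B51hᵀ)))
            (Matrix.fromRows 0 (Matrix.fromRows 0 (Matrix.fromRows 0 B51h)))
            (Matrix.fromBlocks A22
              (Matrix.fromCols 0 (Matrix.fromCols B42hᵀ 0))
              (Matrix.fromRows 0 (Matrix.fromRows B42h 0))
              (Matrix.fromBlocks A33 0 0 0)) ∧
        -- (iii) the transformed right-hand side
        ∀ F3 : Fin n3 → ℝ,
          Vᵀ.mulVec (Sum.elim (Sum.elim (0 : Fin n1 → ℝ) (0 : Fin n2 → ℝ))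
              (Sum.elim F3 (0 : Fin n4 → ℝ))) =
            Sum.elim (0 : Fin n4 → ℝ) (Sum.elim (0 : Fin n3 → ℝ)
              (Sum.elim (0 : Fin (n1 + n2 - n3 - n4) → ℝ)
                (Sum.elim F3 (0 : Fin n4 → ℝ)))) := by
  set A : Matrix (Fin n1 ⊕ Fin n2) (Fin n1 ⊕ Fin n2) ℝ := fromBlocks A11 0 0 0
  set B : Matrix (Fin n3 ⊕ Fin n4) (Fin n1 ⊕ Fin n2) ℝ := fromBlocks 0 B32 B41 B42
  have hA : A.IsSymm := (isHermitian_iff_isSymm.mp hA11.isHermitian).fromBlocks (by simp) isSymm_zero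
  have hKB : fromBlocks A (fromBlocks 0 B41ᵀ B32ᵀ B42ᵀ) B 0 = saddlePoint A B := by
    rw [saddlePoint, fromBlocks_transpose, transpose_zero]
  obtain ⟨W, Y, hAW, hBW⟩ := exists_mul_eq_one_of_isUnit_saddlePoint (hKB ▸ hK)
  have hcard := card_le_card_of_mul_eq_one hBW
  simp only [Fintype.card_sum, Fintype.card_fin] at hcard
  obtain ⟨Z, hBZ, hZ⟩ :=
    exists_mulVec_injective_mul_eq_zero hBW (k := n1 + n2 - n3 - n4)
      (by simp only [Fintype.card_sum, Fintype.card_fin]; omega)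
  have hZA := transpose_mul_mul_eq_zero_of_add_mul_eq_zero hAW hBZ
  rw [← fromCols_toCols W] at hZA hBW
  set W₃ := W.toCols₁
  set W₄ := W.toCols₂
  set P := -(2⁻¹ : ℝ) • (W₄ᵀ * A * W₄)
  have hP : W₄ᵀ * A * W₄ + P + Pᵀ = 0 := by
    rw [transpose_smul, hA.transpose_transpose_mul_mul]
    module
  obtain ⟨V', hVV', hV'V⟩ := exists_mul_eq_one_of_mulVec_injective
    (by simp only [Fintype.card_sum, Fintype.card_fin]; omega)
    (canonicalTransform_mulVec_injective (P := P) (Q := -(W₄ᵀ * A * W₃)) hBW hBZ hZ)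
  refine ⟨_, V', hVV', hV'V, W₃ᵀ * A * W₃, Zᵀ * A * Z, 1, 1, hA.transpose_transpose_mul_mul Z Z,
    isUnit_one, isUnit_one, canonicalTransform_transpose_mul_fromBlocks_mul M, ?_, ?_⟩
  · rw [hKB, canonicalTransform_transpose_mul_saddlePoint_mul hA hBW hBZ hZA hP
      (add_neg_cancel _)]
    simp only [transpose_one]
  · intro F3
    rw [Sum.elim_zero_zero]
    exact canonicalTransform_transpose_mulVec F3

/-- Canonical form of the structured matrix pair (E, K). -/
theorem dae_canonical_form (n1 n2 n3 n4 : ℕ)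
    (M : Matrix (Fin n3) (Fin n3) ℝ) (A11 : Matrix (Fin n1) (Fin n1) ℝ)
    (B32 : Matrix (Fin n3) (Fin n2) ℝ) (B41 : Matrix (Fin n4) (Fin n1) ℝ)
    (B42 : Matrix (Fin n4) (Fin n2) ℝ)
    (hM : M.PosDef) (hA11 : A11.PosSemidef)
    (hK : IsUnit (Matrix.fromBlocks
      (Matrix.fromBlocks A11 0 0 0) (Matrix.fromBlocks 0 B41ᵀ B32ᵀ B42ᵀ)
      (Matrix.fromBlocks 0 B32 B41 B42) 0))
    (hKerB : ∀ x : Fin n1 ⊕ Fin n2 → ℝ,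
      (Matrix.fromBlocks 0 B32 B41 B42).mulVec x = 0 → x ≠ 0 →
      0 < x ⬝ᵥ (Matrix.fromBlocks A11 0 0 0).mulVec x) :
    ∃ (V : Matrix ((Fin n1 ⊕ Fin n2) ⊕ (Fin n3 ⊕ Fin n4))
          (Fin n4 ⊕ (Fin n3 ⊕ (Fin (n1 + n2 - n3 - n4) ⊕ (Fin n3 ⊕ Fin n4)))) ℝ)
      (V' : Matrix (Fin n4 ⊕ (Fin n3 ⊕ (Fin (n1 + n2 - n3 - n4) ⊕ (Fin n3 ⊕ Fin n4))))
          ((Fin n1 ⊕ Fin n2) ⊕ (Fin n3 ⊕ Fin n4)) ℝ),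
      V * V' = 1 ∧ V' * V = 1 ∧
      ∃ (A22 : Matrix (Fin n3) (Fin n3) ℝ)
        (A33 : Matrix (Fin (n1 + n2 - n3 - n4)) (Fin (n1 + n2 - n3 - n4)) ℝ)
        (B42h : Matrix (Fin n3) (Fin n3) ℝ) (B51h : Matrix (Fin n4) (Fin n4) ℝ),
        A33.IsSymm ∧ IsUnit B42h ∧ IsUnit B51h ∧
        -- (i) the transformed E
        Vᵀ * (Matrix.fromBlocks 0 0 0 (Matrix.fromBlocks M 0 0 0) :
            Matrix ((Fin n1 ⊕ Fin n2) ⊕ (Fin n3 ⊕ Fin n4)) ((Fin n1 ⊕ Fin n2) ⊕ (Fin n3 ⊕ Fin n4)) ℝ) * V =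
          Matrix.fromBlocks 0 0 0 (Matrix.fromBlocks 0 0 0
            (Matrix.fromBlocks 0 0 0 (Matrix.fromBlocks M 0 0 0))) ∧
        -- (ii) the transformed K
        Vᵀ * (Matrix.fromBlocks
            (Matrix.fromBlocks A11 0 0 0) (Matrix.fromBlocks 0 B41ᵀ B32ᵀ B42ᵀ)
            (Matrix.fromBlocks 0 B32 B41 B42) 0) * V =
          Matrix.fromBlocks 0
            (Matrix.fromCols 0 (Matrix.fromCols 0 (Matrix.fromCols 0 B51hᵀ)))
            (Matrix.fromRows 0 (Matrix.fromRows 0 (Matrix.fromRows 0 B51h)))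
            (Matrix.fromBlocks A22
              (Matrix.fromCols 0 (Matrix.fromCols B42hᵀ 0))
              (Matrix.fromRows 0 (Matrix.fromRows B42h 0))
              (Matrix.fromBlocks A33 0 0 0)) ∧
        -- (iii) the transformed right-hand side
        ∀ F3 : Fin n3 → ℝ,
          Vᵀ.mulVec (Sum.elim (Sum.elim (0 : Fin n1 → ℝ) (0 : Fin n2 → ℝ))
              (Sum.elim F3 (0 : Fin n4 → ℝ))) =
            Sum.elim (0 : Fin n4 → ℝ) (Sum.elim (0 : Fin n3 → ℝ)
              (Sum.elim (0 : Fin (n1 + n2 - n3 - n4) → ℝ)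
                (Sum.elim F3 (0 : Fin n4 → ℝ)))) :=
  dae_canonical_form_general n1 n2 n3 n4 M A11 B32 B41 B42 hA11 hK
end

section
/- Solution structure of the transformed differential-algebraic equation: let Ê = diag(0, 0, 0, M, 0) and K̂ = [[0, 0, 0, 0, B̂₅₁ᵀ], [0, Â₂₂, 0, B̂₄₂ᵀ, 0], [0, 0, Â₃₃, 0, 0], [0, B̂₄₂, 0, 0, 0], [B̂₅₁, 0, 0, 0, 0]] be real block matrices with M symmetric positive definite and Â₃₃, B̂₄₂, B̂₅₁ invertible (B̂₄₂ and B̂₅₁ square). Let F̂₄ : ℝ → ℝ^{n₃} be continuous and suppose z = (z₁, z₂, z₃, z₄, z₅) : ℝ → ℝⁿ is a function whose block components z₂ and z₄ are twice differentiable and which satisfies −Ê z̈(t) + K̂ z(t) = (0, 0, 0, F̂₄(t), 0) for all t. Then for all t: z₁(t) = 0, z₃(t) = 0, z₅(t) = 0, z₄(t) = −(B̂₄₂ᵀ)⁻¹ Â₂₂ z₂(t), and z₂ satisfies the second-order equation Â₂₂ z̈₂(t) + B̂₄₂ᵀ M⁻¹ B̂₄₂ z₂(t) = B̂₄₂ᵀ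 M⁻¹ F̂₄(t). -/
/-!
Reading off the five block rows, rows 1, 3 and 5 say that B̂₅₁ᵀ z₅, Â₃₃ z₃ and B̂₅₁ z₁ vanish,
so invertibility kills z₅, z₃, z₁. Row 2, Â₂₂ z₂ + B̂₄₂ᵀ z₄ = 0, determines z₄, and since it is a
linear constraint holding at all times it survives two differentiations:
Â₂₂ z̈₂ + B̂₄₂ᵀ z̈₄ = 0. Multiplying row 4, B̂₄₂ z₂ - M z̈₄ = F̂₄, by B̂₄₂ᵀ M⁻¹ eliminates z̈₄.
-/

open Matrix

namespace Matrix

variable {R ι κ μ ν : Type*} [Fintype κ] [DecidableEq κ]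

theorem eq_zero_of_isUnit_of_mulVec_eq_zero [Semiring R] {A : Matrix κ κ R} (hA : IsUnit A)
    {v : κ → R} (h : A *ᵥ v = 0) : v = 0 :=
  mulVec_injective_of_isUnit hA (h.trans (mulVec_zero A).symm)

theorem eq_neg_inv_mulVec_of_add_mulVec_eq_zero [CommRing R] [Fintype μ] {B : Matrix κ κ R}
    (hB : IsUnit B) (A : Matrix κ μ R) {x : μ → R} {y : κ → R} (h : A *ᵥ x + B *ᵥ y = 0) :
    y = -(B⁻¹ *ᵥ (A *ᵥ x)) := by
  have := hB.invertible
  rw [← mulVec_neg]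
  exact (inv_mulVec_eq_vec (eq_neg_of_add_eq_zero_right h).symm).symm

theorem add_mul_inv_mul_mulVec_eq_of_sub_eq [CommRing R] [Fintype μ] [Fintype ν]
    {M : Matrix κ κ R} (hM : IsUnit M) (A : Matrix ι ν R) (N : Matrix ι κ R) (B : Matrix κ μ R)
    {v : ν → R} {w : κ → R} {z : μ → R} {F : κ → R}
    (hc : N *ᵥ w = -(A *ᵥ v)) (h : B *ᵥ z - M *ᵥ w = F) :
    A *ᵥ v + (N * M⁻¹ * B) *ᵥ z = (N * M⁻¹) *ᵥ F := by
  have hNM : N * M⁻¹ * M = N :=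
    nonsing_inv_mul_cancel_right M N ((isUnit_iff_isUnit_det M).mp hM)
  rw [← h, mulVec_sub, mulVec_mulVec, mulVec_mulVec, hNM, hc]
  abel

end Matrix

theorem HasDerivAt.matrix_mulVec {𝕜 ι κ : Type*} [NontriviallyNormedField 𝕜] [Fintype ι]
    [Fintype κ] (A : Matrix ι κ 𝕜) {f : 𝕜 → κ → 𝕜} {f' : κ → 𝕜} {t : 𝕜}
    (hf : HasDerivAt f f' t) :
    HasDerivAt (fun s ↦ A *ᵥ f s) (A *ᵥ f') t :=
  (⟨A.mulVecLin, A.mulVecLin.continuous_on_pi⟩ : (κ → 𝕜) →L[𝕜] ι → 𝕜).hasFDerivAt.comp_hasDerivAt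
    t hf

theorem mulVec_add_mulVec_eq_zero_of_hasDerivAt {𝕜 ι κ μ : Type*} [NontriviallyNormedField 𝕜]
    [Fintype κ] [Fintype μ] [Fintype ι] (A : Matrix ι κ 𝕜) (B : Matrix ι μ 𝕜)
    {x : 𝕜 → κ → 𝕜} {y : 𝕜 → μ → 𝕜} {dx : 𝕜 → κ → 𝕜} {dy : 𝕜 → μ → 𝕜}
    (hx : ∀ t, HasDerivAt x (dx t) t) (hy : ∀ t, HasDerivAt y (dy t) t)
    (h : ∀ t, A *ᵥ x t + B *ᵥ y t = 0) (t : 𝕜) : A *ᵥ dx t + B *ᵥ dy t = 0 := by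
  have hderiv : HasDerivAt (fun s ↦ A *ᵥ x s + B *ᵥ y s) (A *ᵥ dx t + B *ᵥ dy t) t :=
    ((hx t).matrix_mulVec A).add ((hy t).matrix_mulVec B)
  rw [funext h] at hderiv
  exact hderiv.unique (hasDerivAt_const t 0)

theorem dae_residual_eq_sumElim {R ι κ μ : Type*} [Ring R] [Fintype ι] [Fintype κ] [Fintype μ]
    (M A22 B42 : Matrix κ κ R) (A33 : Matrix μ μ R) (B51 : Matrix ι ι R)
    (z1 z5 : ι → R) (z2 z4 w2 w4 : κ → R) (z3 : μ → R) :
    -(fromBlocks 0 0 0 (fromBlocks 0 0 0 (fromBlocks 0 0 0 (fromBlocks M 0 0 0))) *ᵥ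
        Sum.elim (0 : ι → R) (Sum.elim w2 (Sum.elim (0 : μ → R) (Sum.elim w4 (0 : ι → R)))))
      + fromBlocks 0 (fromCols 0 (fromCols 0 (fromCols 0 B51ᵀ)))
          (fromRows 0 (fromRows 0 (fromRows 0 B51)))
          (fromBlocks A22 (fromCols 0 (fromCols B42ᵀ 0)) (fromRows 0 (fromRows B42 0))
            (fromBlocks A33 0 0 0)) *ᵥ
        Sum.elim z1 (Sum.elim z2 (Sum.elim z3 (Sum.elim z4 z5)))
      = Sum.elim (B51ᵀ *ᵥ z5) (Sum.elim (A22 *ᵥ z2 + B42ᵀ *ᵥ z4)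
          (Sum.elim (A33 *ᵥ z3) (Sum.elim (B42 *ᵥ z2 - M *ᵥ w4) (B51 *ᵥ z1)))) := by
  ext (i | i | i | i | i) <;>
    simp [fromBlocks_mulVec, sub_eq_neg_add]

theorem dae_solution_structure_general (n4 n3 m : ℕ)
    (M : Matrix (Fin n3) (Fin n3) ℝ) (A22 : Matrix (Fin n3) (Fin n3) ℝ)
    (A33 : Matrix (Fin m) (Fin m) ℝ) (B42h : Matrix (Fin n3) (Fin n3) ℝ)
    (B51h : Matrix (Fin n4) (Fin n4) ℝ)
    (hM : M.PosDef) (hA33 : IsUnit A33)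
    (hB42 : IsUnit B42h) (hB51 : IsUnit B51h)
    (F4 : ℝ → Fin n3 → ℝ)
    (z1 : ℝ → Fin n4 → ℝ) (z2 : ℝ → Fin n3 → ℝ) (z3 : ℝ → Fin m → ℝ)
    (z4 : ℝ → Fin n3 → ℝ) (z5 : ℝ → Fin n4 → ℝ)
    (dz2 ddz2 : ℝ → Fin n3 → ℝ) (dz4 ddz4 : ℝ → Fin n3 → ℝ)
    (hz2 : ∀ τ, HasDerivAt z2 (dz2 τ) τ) (hz2' : ∀ τ, HasDerivAt dz2 (ddz2 τ) τ)
    (hz4 : ∀ τ, HasDerivAt z4 (dz4 τ) τ) (hz4' : ∀ τ, HasDerivAt dz4 (ddz4 τ) τ)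
    (hdae : ∀ τ : ℝ,
      -(Matrix.fromBlocks 0 0 0 (Matrix.fromBlocks 0 0 0
          (Matrix.fromBlocks 0 0 0 (Matrix.fromBlocks M 0 0 0)))).mulVec
        (Sum.elim (0 : Fin n4 → ℝ) (Sum.elim (ddz2 τ)
          (Sum.elim (0 : Fin m → ℝ) (Sum.elim (ddz4 τ) (0 : Fin n4 → ℝ)))))
      + (Matrix.fromBlocks 0
            (Matrix.fromCols 0 (Matrix.fromCols 0 (Matrix.fromCols 0 B51hᵀ)))
            (Matrix.fromRows 0 (Matrix.fromRows 0 (Matrix.fromRows 0 B51h)))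
            (Matrix.fromBlocks A22
              (Matrix.fromCols 0 (Matrix.fromCols B42hᵀ 0))
              (Matrix.fromRows 0 (Matrix.fromRows B42h 0))
              (Matrix.fromBlocks A33 0 0 0))).mulVec
        (Sum.elim (z1 τ) (Sum.elim (z2 τ) (Sum.elim (z3 τ) (Sum.elim (z4 τ) (z5 τ)))))
      = Sum.elim (0 : Fin n4 → ℝ) (Sum.elim (0 : Fin n3 → ℝ)
          (Sum.elim (0 : Fin m → ℝ) (Sum.elim (F4 τ) (0 : Fin n4 → ℝ))))) :
    ∀ τ : ℝ,
      z1 τ = 0 ∧ z3 τ = 0 ∧ z5 τ = 0 ∧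
      z4 τ = -(B42hᵀ)⁻¹.mulVec (A22.mulVec (z2 τ)) ∧
      A22.mulVec (ddz2 τ) + (B42hᵀ * M⁻¹ * B42h).mulVec (z2 τ)
        = (B42hᵀ * M⁻¹).mulVec (F4 τ) := by
  have hrows : ∀ τ, B51hᵀ *ᵥ z5 τ = 0 ∧ A22 *ᵥ z2 τ + B42hᵀ *ᵥ z4 τ = 0 ∧ A33 *ᵥ z3 τ = 0 ∧
      B42h *ᵥ z2 τ - M *ᵥ ddz4 τ = F4 τ ∧ B51h *ᵥ z1 τ = 0 := fun τ ↦ by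
    simpa only [dae_residual_eq_sumElim, Sum.elim_eq_iff] using hdae τ
  have hconstraint_dd : ∀ τ, A22 *ᵥ ddz2 τ + B42hᵀ *ᵥ ddz4 τ = 0 :=
    mulVec_add_mulVec_eq_zero_of_hasDerivAt A22 B42hᵀ hz2' hz4'
      (mulVec_add_mulVec_eq_zero_of_hasDerivAt A22 B42hᵀ hz2 hz4 fun τ ↦ (hrows τ).2.1)
  intro τ
  obtain ⟨hrow1, hrow2, hrow3, hrow4, hrow5⟩ := hrows τ
  exact ⟨eq_zero_of_isUnit_of_mulVec_eq_zero hB51 hrow5,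
    eq_zero_of_isUnit_of_mulVec_eq_zero hA33 hrow3,
    eq_zero_of_isUnit_of_mulVec_eq_zero ((isUnit_transpose _).mpr hB51) hrow1,
    eq_neg_inv_mulVec_of_add_mulVec_eq_zero ((isUnit_transpose _).mpr hB42) A22 hrow2,
    add_mul_inv_mul_mulVec_eq_of_sub_eq hM.isUnit A22 B42hᵀ B42h
      (eq_neg_of_add_eq_zero_right (hconstraint_dd τ)) hrow4⟩

/-- Solution structure of the transformed differential-algebraic
equation.  The blocks have sizes n₄, n₃, m, n₃, n₄. -/
theorem dae_solution_structure (n4 n3 m : ℕ)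
    (M : Matrix (Fin n3) (Fin n3) ℝ) (A22 : Matrix (Fin n3) (Fin n3) ℝ)
    (A33 : Matrix (Fin m) (Fin m) ℝ) (B42h : Matrix (Fin n3) (Fin n3) ℝ)
    (B51h : Matrix (Fin n4) (Fin n4) ℝ)
    (hM : M.PosDef) (hA22 : A22.IsSymm) (hA33symm : A33.IsSymm) (hA33 : IsUnit A33)
    (hB42 : IsUnit B42h) (hB51 : IsUnit B51h)
    (F4 : ℝ → Fin n3 → ℝ) (hF4 : Continuous F4)
    (z1 : ℝ → Fin n4 → ℝ) (z2 : ℝ → Fin n3 → ℝ) (z3 : ℝ → Fin m → ℝ)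
    (z4 : ℝ → Fin n3 → ℝ) (z5 : ℝ → Fin n4 → ℝ)
    (dz2 ddz2 : ℝ → Fin n3 → ℝ) (dz4 ddz4 : ℝ → Fin n3 → ℝ)
    (hz2 : ∀ τ, HasDerivAt z2 (dz2 τ) τ) (hz2' : ∀ τ, HasDerivAt dz2 (ddz2 τ) τ)
    (hz4 : ∀ τ, HasDerivAt z4 (dz4 τ) τ) (hz4' : ∀ τ, HasDerivAt dz4 (ddz4 τ) τ)
    (hdae : ∀ τ : ℝ,
      -(Matrix.fromBlocks 0 0 0 (Matrix.fromBlocks 0 0 0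
          (Matrix.fromBlocks 0 0 0 (Matrix.fromBlocks M 0 0 0)))).mulVec
        (Sum.elim (0 : Fin n4 → ℝ) (Sum.elim (ddz2 τ)
          (Sum.elim (0 : Fin m → ℝ) (Sum.elim (ddz4 τ) (0 : Fin n4 → ℝ)))))
      + (Matrix.fromBlocks 0
            (Matrix.fromCols 0 (Matrix.fromCols 0 (Matrix.fromCols 0 B51hᵀ)))
            (Matrix.fromRows 0 (Matrix.fromRows 0 (Matrix.fromRows 0 B51h)))
            (Matrix.fromBlocks A22
              (Matrix.fromCols 0 (Matrix.fromCols B42hᵀ 0))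
              (Matrix.fromRows 0 (Matrix.fromRows B42h 0))
              (Matrix.fromBlocks A33 0 0 0))).mulVec
        (Sum.elim (z1 τ) (Sum.elim (z2 τ) (Sum.elim (z3 τ) (Sum.elim (z4 τ) (z5 τ)))))
      = Sum.elim (0 : Fin n4 → ℝ) (Sum.elim (0 : Fin n3 → ℝ)
          (Sum.elim (0 : Fin m → ℝ) (Sum.elim (F4 τ) (0 : Fin n4 → ℝ))))) :
    ∀ τ : ℝ,
      z1 τ = 0 ∧ z3 τ = 0 ∧ z5 τ = 0 ∧
      z4 τ = -(B42hᵀ)⁻¹.mulVec (A22.mulVec (z2 τ)) ∧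
      A22.mulVec (ddz2 τ) + (B42hᵀ * M⁻¹ * B42h).mulVec (z2 τ)
        = (B42hᵀ * M⁻¹).mulVec (F4 τ) :=
  dae_solution_structure_general n4 n3 m M A22 A33 B42h B51h hM hA33 hB42 hB51 F4 z1 z2 z3 z4 z5 dz2
    ddz2 dz4 ddz4 hz2 hz2' hz4 hz4' hdae
end
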